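/- arXiv:2305.05219 — 7 statements merged into one kernel-verified Lean document; each statement's English description precedes it below -/
import Mathlib

section
/- Let G be a finite group with an orthogonal matrix representation M : G → O_n(ℝ), acting on the space Sym_n(ℝ) of real symmetric n×n matrices by X^g := M(g) X M(g)^T. Let C, A_1, …, A_m ∈ Sym_n(ℝ) and b ∈ ℝ^m, and let L := {X ∈ Sym_n(ℝ) : ⟨A_i, X⟩ = b_i for 1 ≤ i ≤ m, X ⪰ 0} be the feasible set of the semidefinite program y* = inf{⟨X, C⟩ : X ∈ L}. Assume the SDP is G-invariant, i.e. X ∈ L implies X^g ∈ L for all g ∈ G, and ⟨X^g, C⟩ = ⟨X, C⟩ for all X ∈ Sym_n(ℝ) and g ∈ G. Then the optimal value is unchanged by restricting to invariant matrices: inf{⟨X, C⟩ : X ∈ L} = inf{⟨X, C⟩ : X ∈ L and X^g = X for all g ∈ G}. -/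
open Matrix

/-! Averaging a feasible `X` over the orbit `X ↦ M g * X * (M g)ᵀ` gives a feasible matrix,
since the feasible set is convex and `G`-stable; the average is `G`-invariant because left
multiplication permutes `G`, and it has the objective value of `X` because the objective is
linear and `G`-invariant. So both infima are taken over the same set of values. -/

section ConjAverage

variable {G ι : Type*} [Group G] [Fintype G] [Fintype ι] (M : G → Matrix ι ι ℝ)

noncomputable def conjAverage (X : Matrix ι ι ℝ) : Matrix ι ι ℝ :=
  (Fintype.card G : ℝ)⁻¹ • ∑ g, M g * X * (M g)ᵀ

variable {M}

theorem conjAverage_mem_of_convex {s : Set (Matrix ι ι ℝ)} (hs : Convex ℝ s)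
    {X : Matrix ι ι ℝ} (hX : ∀ g, M g * X * (M g)ᵀ ∈ s) : conjAverage M X ∈ s := by
  rw [conjAverage, Finset.smul_sum]
  refine hs.sum_mem (fun _ _ => by positivity) ?_ fun g _ => hX g
  simp [Finset.card_univ, Fintype.card_ne_zero]

theorem conj_conjAverage (hM : ∀ g h, M (g * h) = M g * M h) (X : Matrix ι ι ℝ) (h : G) :
    M h * conjAverage M X * (M h)ᵀ = conjAverage M X := by
  have hconj : ∀ g, M h * (M g * X * (M g)ᵀ) * (M h)ᵀ = M (h * g) * X * (M (h * g))ᵀ := by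
    intro g
    simp only [hM, transpose_mul, Matrix.mul_assoc]
  rw [conjAverage, Matrix.mul_smul, Matrix.smul_mul, Finset.mul_sum, Finset.sum_mul]
  simp only [hconj]
  congr 1
  exact Fintype.sum_equiv (Equiv.mulLeft h) _ _ fun _ => rfl

theorem map_conjAverage_of_forall_map_conj_eq {F : Type*} [AddCommGroup F] [Module ℝ F]
    (φ : Matrix ι ι ℝ →ₗ[ℝ] F) {X : Matrix ι ι ℝ} (hφ : ∀ g, φ (M g * X * (M g)ᵀ) = φ X) :
    φ (conjAverage M X) = φ X := by
  simp only [conjAverage, map_smul, map_sum, hφ, Finset.sum_const, Finset.card_univ,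
    ← Nat.cast_smul_eq_nsmul ℝ, smul_smul]
  rw [inv_mul_cancel₀ (by exact_mod_cast Fintype.card_ne_zero), one_smul]

end ConjAverage

theorem convex_setOf_isSymm_trace_eq_posSemidef {ι κ : Type*} [Fintype ι]
    (A : κ → Matrix ι ι ℝ) (b : κ → ℝ) :
    Convex ℝ {X : Matrix ι ι ℝ | X.IsSymm ∧ (∀ i, (A i * X).trace = b i) ∧ X.PosSemidef} := by
  rintro X ⟨hXs, hXA, hXp⟩ Y ⟨hYs, hYA, hYp⟩ s t hs ht hst
  refine ⟨(hXs.smul s).add (hYs.smul t), fun i => ?_, (hXp.smul hs).add (hYp.smul ht)⟩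
  simp only [Matrix.mul_add, Matrix.mul_smul, trace_add, trace_smul, hXA, hYA, smul_eq_mul,
    ← add_mul, hst, one_mul]

theorem sdp_symmetry_reduction_general {n m : ℕ} {G : Type*} [Group G] [Fintype G]
    (M : G → Matrix (Fin n) (Fin n) ℝ)
    (hMhom : ∀ g h : G, M (g * h) = M g * M h)
    (C : Matrix (Fin n) (Fin n) ℝ)
    (A : Fin m → Matrix (Fin n) (Fin n) ℝ)
    (b : Fin m → ℝ)
    (L : Set (Matrix (Fin n) (Fin n) ℝ))
    (hL : L = {X | X.IsSymm ∧ (∀ i, (A i * X).trace = b i) ∧ X.PosSemidef})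
    (hLinv : ∀ X ∈ L, ∀ g : G, M g * X * (M g)ᵀ ∈ L)
    (hCinv : ∀ (X : Matrix (Fin n) (Fin n) ℝ) (g : G),
      ((M g * X * (M g)ᵀ) * C).trace = (X * C).trace) :
    sInf ((fun X => (X * C).trace) '' L) =
      sInf ((fun X => (X * C).trace) ''
        {X | X ∈ L ∧ ∀ g : G, M g * X * (M g)ᵀ = X}) := by
  have hLconv : Convex ℝ L := hL ▸ convex_setOf_isSymm_trace_eq_posSemidef A b
  let objective : Matrix (Fin n) (Fin n) ℝ →ₗ[ℝ] ℝ :=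
    (traceLinearMap (Fin n) ℝ ℝ).comp (LinearMap.mulRight ℝ C)
  congr 1
  refine (Set.image_mono fun X hX => hX.1).antisymm' ?_
  rintro - ⟨X, hX, rfl⟩
  exact ⟨conjAverage M X,
    ⟨conjAverage_mem_of_convex hLconv (hLinv X hX), conj_conjAverage hMhom X⟩,
    map_conjAverage_of_forall_map_conj_eq objective (hCinv X)⟩

/-- **Invariance of the optimal value of a `G`-invariant SDP.**
`M : G → Matrix (Fin n) (Fin n) ℝ` is an orthogonal matrix representation of the finite
group `G`, acting on symmetric matrices by `X ↦ M g * X * (M g)ᵀ`.  If both the feasible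
set `L` of the SDP and the objective `X ↦ ⟨X, C⟩ = Tr (X * C)` are `G`-invariant, then the
optimal value is unchanged when restricting to `G`-invariant feasible matrices. -/
theorem sdp_symmetry_reduction {n m : ℕ} {G : Type*} [Group G] [Fintype G]
    (M : G → Matrix (Fin n) (Fin n) ℝ)
    (hMhom : ∀ g h : G, M (g * h) = M g * M h)
    (hMorth : ∀ g : G, M g * (M g)ᵀ = 1)
    (C : Matrix (Fin n) (Fin n) ℝ) (hC : C.IsSymm)
    (A : Fin m → Matrix (Fin n) (Fin n) ℝ) (hA : ∀ i, (A i).IsSymm)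
    (b : Fin m → ℝ)
    (L : Set (Matrix (Fin n) (Fin n) ℝ))
    (hL : L = {X | X.IsSymm ∧ (∀ i, (A i * X).trace = b i) ∧ X.PosSemidef})
    (hLinv : ∀ X ∈ L, ∀ g : G, M g * X * (M g)ᵀ ∈ L)
    (hCinv : ∀ (X : Matrix (Fin n) (Fin n) ℝ) (g : G),
      ((M g * X * (M g)ᵀ) * C).trace = (X * C).trace) :
    sInf ((fun X => (X * C).trace) '' L) =
      sInf ((fun X => (X * C).trace) ''
        {X | X ∈ L ∧ ∀ g : G, M g * X * (M g)ᵀ = X}) :=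
  sdp_symmetry_reduction_general M hMhom C A b L hL hLinv hCinv
end

section
/- Lovász sandwich theorem: for every finite simple graph Γ = (V, E), the independence number, the Lovász theta number, and the chromatic number of the complement graph satisfy α(Γ) ≤ ϑ(Γ) ≤ χ(Γ̄), where Γ̄ denotes the complement graph of Γ. -/
open Matrix

/-- Key inequality: any feasible matrix of the Lovász SDP has total sum at most the number
of colors of any proper coloring of the complement graph. -/
lemma lovasz_sum_le_of_colorable {n k : ℕ} (Γ : SimpleGraph (Fin n))
    (hc : Γᶜ.Colorable k) (B : Matrix (Fin n) (Fin n) ℝ)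
    (hpsd : B.PosSemidef) (htr : (∑ i, B i i) = 1)
    (hE : ∀ i j, Γ.Adj i j → B i j = 0) :
    (∑ i, ∑ j, B i j) ≤ (k : ℝ) := by
  have hn : 0 < n := by
    rcases Nat.eq_zero_or_pos n with h | h
    · subst h; simp at htr
    · exact h
  obtain ⟨c⟩ := hc
  have hk : 0 < k := Fin.pos (c ⟨0, hn⟩)
  set K : ℝ := (k : ℝ) with hK
  have hKpos : 0 < K := by rw [hK]; exact_mod_cast hk
  -- quadratic form nonneg
  have hq : ∀ x : Fin n → ℝ, 0 ≤ ∑ i, ∑ j, x i * B i j * x j := by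
    intro x
    have h := hpsd.dotProduct_mulVec_nonneg x
    simpa [dotProduct, mulVec, Finset.mul_sum, mul_assoc] using h
  set v : Fin k → Fin n → ℝ := fun t i => (if c i = t then K else 0) - 1 with hv
  have h0 : 0 ≤ ∑ t : Fin k, ∑ i, ∑ j, v t i * B i j * v t j :=
    Finset.sum_nonneg fun t _ => hq (v t)
  have hvv : ∀ i j, (∑ t : Fin k, v t i * v t j)
      = (if c i = c j then K ^ 2 - K else -K) := by
    intro i j
    have expand : ∀ t : Fin k, v t i * v t j =
        (if c i = t then K else 0) * (if c j = t then K else 0)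
        - (if c i = t then K else 0) - (if c j = t then K else 0) + 1 := by
      intro t; simp only [hv]; ring
    rw [Finset.sum_congr rfl (fun t _ => expand t)]
    have hprod : (∑ t : Fin k, (if c i = t then K else 0) * (if c j = t then K else 0))
        = if c i = c j then K * K else 0 := by
      by_cases h : c i = c j
      · rw [if_pos h, ← h]
        rw [Finset.sum_eq_single (c i)]
        · simp
        · intro b _ hb; simp [Ne.symm hb]
        · simp
      · rw [if_neg h]
        apply Finset.sum_eq_zero
        intro t _
        by_cases h1 : c i = t
        · have : ¬ c j = t := fun h2 => h (h1.trans h2.symm)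
          simp [this]
        · simp [h1]
    simp only [Finset.sum_add_distrib, Finset.sum_sub_distrib, hprod,
      Finset.sum_ite_eq Finset.univ, Finset.mem_univ, if_true,
      Finset.sum_const, Finset.card_univ, Fintype.card_fin, nsmul_eq_mul, mul_one]
    by_cases h : c i = c j <;> simp [h] <;> ring
  have hswap : (∑ t : Fin k, ∑ i, ∑ j, v t i * B i j * v t j)
      = ∑ i, ∑ j, B i j * (if c i = c j then K ^ 2 - K else -K) := by
    rw [Finset.sum_comm]
    refine Finset.sum_congr rfl fun i _ => ?_
    rw [Finset.sum_comm]
    refine Finset.sum_congr rfl fun j _ => ?_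
    rw [← hvv i j, Finset.mul_sum]
    exact Finset.sum_congr rfl fun t _ => by ring
  -- diag sum
  have hD : (∑ i, ∑ j, (if c i = c j then B i j else 0)) = 1 := by
    rw [← htr]
    refine Finset.sum_congr rfl fun i _ => ?_
    rw [Finset.sum_eq_single i]
    · simp
    · intro j _ hj
      by_cases h : c i = c j
      · have hnadj : ¬ Γᶜ.Adj i j := fun ha => c.valid ha h
        rw [SimpleGraph.compl_adj] at hnadj
        push_neg at hnadj
        have : Γ.Adj i j := by
          by_contra hA
          exact hA (hnadj (Ne.symm hj)) |>.elim
        simp [h, hE i j this]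
      · simp [h]
    · simp
  have hfinal : (∑ i, ∑ j, B i j * (if c i = c j then K ^ 2 - K else -K))
      = K ^ 2 * (∑ i, ∑ j, (if c i = c j then B i j else 0)) - K * (∑ i, ∑ j, B i j) := by
    rw [Finset.mul_sum, Finset.mul_sum, ← Finset.sum_sub_distrib]
    refine Finset.sum_congr rfl fun i _ => ?_
    rw [Finset.mul_sum, Finset.mul_sum, ← Finset.sum_sub_distrib]
    refine Finset.sum_congr rfl fun j _ => ?_
    by_cases h : c i = c j <;> simp [h] <;> ring
  rw [hswap, hfinal, hD] at h0
  nlinarith [h0, hKpos]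

/-- Any independent set of size `a > 0` yields a feasible matrix with total sum `a`. -/
lemma lovasz_indep_feasible {n : ℕ} (Γ : SimpleGraph (Fin n)) [DecidableRel Γ.Adj]
    (S : Finset (Fin n))
    (hSind : ((S : Set (Fin n)).Pairwise fun i j => ¬ Γ.Adj i j))
    (a : ℕ) (hScard : S.card = a) (ha : 0 < a) :
    ∃ B : Matrix (Fin n) (Fin n) ℝ,
      B.IsSymm ∧ B.PosSemidef ∧ (∑ i, B i i) = 1 ∧
      (∀ i j, Γ.Adj i j → B i j = 0) ∧ (a : ℝ) = ∑ i, ∑ j, B i j := by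
  have haR : (0:ℝ) < a := by exact_mod_cast ha
  set B : Matrix (Fin n) (Fin n) ℝ :=
    fun i j => if i ∈ S ∧ j ∈ S then (a : ℝ)⁻¹ else 0 with hB
  have hsym : B.IsSymm := by
    ext i j; rw [Matrix.transpose_apply]; simp [hB, Matrix.transpose_apply, and_comm]
  have hquad : ∀ x : Fin n → ℝ, star x ⬝ᵥ B *ᵥ x = (a:ℝ)⁻¹ * (∑ i ∈ S, x i) ^ 2 := by
    intro x
    have h1 : star x ⬝ᵥ B *ᵥ x
        = ∑ i, ∑ j, x i * ((if i ∈ S ∧ j ∈ S then (a : ℝ)⁻¹ else 0) * x j) := by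
      simp [dotProduct, mulVec, hB, Finset.mul_sum]
    rw [h1]
    have h2 : ∀ i j, x i * ((if i ∈ S ∧ j ∈ S then (a : ℝ)⁻¹ else 0) * x j)
        = (if i ∈ S then x i else 0) * ((a:ℝ)⁻¹ * (if j ∈ S then x j else 0)) := by
      intro i j
      by_cases hi : i ∈ S <;> by_cases hj : j ∈ S <;> simp [hi, hj]
    simp_rw [h2, ← Finset.mul_sum, ← Finset.sum_mul,
      Finset.sum_ite_mem, Finset.univ_inter]
    ring
  have hpsd : B.PosSemidef := by
    refine Matrix.PosSemidef.of_dotProduct_mulVec_nonneg ?_ ?_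
    · rw [Matrix.IsHermitian]; ext i j; rw [Matrix.conjTranspose_apply]; simp [hB, and_comm]
    · intro x
      rw [hquad x]
      positivity
  have htr : (∑ i, B i i) = 1 := by
    have h3 : ∀ i, B i i = if i ∈ S then (a:ℝ)⁻¹ else 0 := by
      intro i; simp [hB]
    rw [Finset.sum_congr rfl fun i _ => h3 i,
      Finset.sum_ite_mem, Finset.univ_inter, Finset.sum_const, hScard]
    simp
    field_simp
  have hedge : ∀ i j, Γ.Adj i j → B i j = 0 := by
    intro i j hadj
    have : ¬ (i ∈ S ∧ j ∈ S) := by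
      rintro ⟨hi, hj⟩
      exact hSind hi hj hadj.ne hadj
    simp [hB, this]
  have hsum : (a : ℝ) = ∑ i, ∑ j, B i j := by
    have h4 : ∀ i j, B i j
        = (if i ∈ S then (1:ℝ) else 0) * ((a:ℝ)⁻¹ * (if j ∈ S then (1:ℝ) else 0)) := by
      intro i j
      by_cases hi : i ∈ S <;> by_cases hj : j ∈ S <;> simp [hB, hi, hj]
    simp_rw [h4, ← Finset.mul_sum, ← Finset.sum_mul,
      Finset.sum_ite_mem, Finset.univ_inter, Finset.sum_const, hScard, nsmul_eq_mul, mul_one]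
    field_simp
  exact ⟨B, hsym, hpsd, htr, hedge, hsum⟩

/-- **Lovász sandwich theorem.**  For a finite simple graph `Γ` on `n` vertices, the
independence number `α(Γ)`, the Lovász theta number `ϑ(Γ)` (defined as the optimal value
of its semidefinite program), and the chromatic number of the complement graph `χ(Γ̄)`
satisfy `α(Γ) ≤ ϑ(Γ) ≤ χ(Γ̄)`. -/
theorem lovasz_sandwich {n : ℕ} (Γ : SimpleGraph (Fin n)) [DecidableRel Γ.Adj]
    (alpha : ℕ)
    (halpha : alpha = sSup {k : ℕ | ∃ S : Finset (Fin n),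
      ((S : Set (Fin n)).Pairwise fun i j => ¬ Γ.Adj i j) ∧ S.card = k})
    (theta : ℝ)
    (htheta : theta = sSup {y : ℝ | ∃ B : Matrix (Fin n) (Fin n) ℝ,
      B.IsSymm ∧ B.PosSemidef ∧ (∑ i, B i i) = 1 ∧
      (∀ i j, Γ.Adj i j → B i j = 0) ∧ y = ∑ i, ∑ j, B i j})
    (chiCompl : ℕ)
    (hchi : chiCompl = sInf {k : ℕ | Γᶜ.Colorable k}) :
    (alpha : ℝ) ≤ theta ∧ theta ≤ (chiCompl : ℝ) := by
  -- the complement graph is colorable with `chiCompl` colors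
  have hcol : Γᶜ.Colorable chiCompl := by
    have hne : {k : ℕ | Γᶜ.Colorable k}.Nonempty :=
      ⟨Fintype.card (Fin n), Set.mem_setOf_eq ▸ Γᶜ.colorable_of_fintype⟩
    rw [hchi]
    exact Nat.sInf_mem hne
  set T : Set ℝ := {y : ℝ | ∃ B : Matrix (Fin n) (Fin n) ℝ,
      B.IsSymm ∧ B.PosSemidef ∧ (∑ i, B i i) = 1 ∧
      (∀ i j, Γ.Adj i j → B i j = 0) ∧ y = ∑ i, ∑ j, B i j} with hT
  have hTle : ∀ y ∈ T, y ≤ (chiCompl : ℝ) := by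
    rintro y ⟨B, _, hpsd, htr, hE, rfl⟩
    exact lovasz_sum_le_of_colorable Γ hcol B hpsd htr hE
  rcases Nat.eq_zero_or_pos n with hn | hn
  · -- degenerate case of the empty graph
    subst hn
    have hA : alpha = 0 := by
      rw [halpha]
      have : {k : ℕ | ∃ S : Finset (Fin 0),
          ((S : Set (Fin 0)).Pairwise fun i j => ¬ Γ.Adj i j) ∧ S.card = k} = {0} := by
        ext k
        constructor
        · rintro ⟨S, -, rfl⟩
          simp [Finset.eq_empty_of_isEmpty S]
        · rintro rfl
          exact ⟨∅, by simp⟩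
      rw [this]
      simp
    have hTe : T = ∅ := by
      rw [hT]
      ext y
      simp only [Set.mem_setOf_eq, Set.mem_empty_iff_false, iff_false]
      rintro ⟨B, -, -, htr, -, -⟩
      simpa using htr
    rw [hA, htheta, hTe, Real.sSup_empty]
    exact ⟨by simp, by positivity⟩
  · -- main case: `n > 0`
    set A : Set ℕ := {k : ℕ | ∃ S : Finset (Fin n),
      ((S : Set (Fin n)).Pairwise fun i j => ¬ Γ.Adj i j) ∧ S.card = k} with hAdef
    have hAbdd : BddAbove A := by
      refine ⟨n, ?_⟩
      rintro k ⟨S, -, rfl⟩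
      simpa using S.card_le_univ
    have hAne : A.Nonempty := ⟨0, ∅, by simp⟩
    have hAmem : alpha ∈ A := halpha ▸ Nat.sSup_mem hAne hAbdd
    have hone : 1 ∈ A := by
      refine ⟨{⟨0, hn⟩}, ?_, by simp⟩
      simp [Set.Pairwise]
    have halpha_pos : 0 < alpha :=
      lt_of_lt_of_le Nat.one_pos (halpha ▸ le_csSup hAbdd hone)
    obtain ⟨S, hSind, hScard⟩ := hAmem
    obtain ⟨B, hsym, hpsd, htr, hE, hsum⟩ :=
      lovasz_indep_feasible Γ S hSind alpha hScard halpha_pos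
    have hmem : (alpha : ℝ) ∈ T := ⟨B, hsym, hpsd, htr, hE, hsum⟩
    have hTbdd : BddAbove T := ⟨(chiCompl : ℝ), hTle⟩
    constructor
    · rw [htheta]
      exact le_csSup hTbdd hmem
    · rw [htheta]
      exact csSup_le ⟨(alpha : ℝ), hmem⟩ hTle
end

section
/- For the cycle graph C_k on k ≥ 3 vertices, the Lovász theta number satisfies ϑ(C_k) = k·cos(π/k)/(1 + cos(π/k)) when k is odd, and ϑ(C_k) = k/2 when k is even. -/
open Matrix Real Complex Finset



noncomputable def lT_omega (k : ℕ) : ℂ := Complex.exp (2 * Real.pi * Complex.I / k)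

lemma lT_omega_ne_zero (k : ℕ) : lT_omega k ≠ 0 := Complex.exp_ne_zero _

lemma lT_omega_zpow_eq_one_iff {k : ℕ} (hk : 0 < k) (d : ℤ) :
    lT_omega k ^ d = 1 ↔ (k : ℤ) ∣ d := by
  have hk' : (k : ℂ) ≠ 0 := Nat.cast_ne_zero.mpr hk.ne'
  have hπ : (2 * (Real.pi:ℂ) * Complex.I) ≠ 0 := by
    simp [Real.pi_ne_zero, Complex.I_ne_zero]
  rw [lT_omega, ← Complex.exp_int_mul, Complex.exp_eq_one_iff]
  constructor
  · rintro ⟨n, hn⟩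
    refine ⟨n, ?_⟩
    have h2 : (d:ℂ) * (2 * Real.pi * Complex.I) = ((k:ℂ) * n) * (2 * Real.pi * Complex.I) := by
      field_simp at hn
      linear_combination (2 * Real.pi * Complex.I) * hn
    have := mul_right_cancel₀ hπ h2
    exact_mod_cast this
  · rintro ⟨n, rfl⟩
    exact ⟨n, by field_simp; norm_cast⟩

lemma lT_geom {k : ℕ} (hk : 0 < k) (d : ℤ) :
    ∑ j ∈ Finset.range k, (lT_omega k ^ d) ^ j
      = if (k : ℤ) ∣ d then (k : ℂ) else 0 := by
  split_ifs with h
  · rw [(lT_omega_zpow_eq_one_iff hk d).mpr h]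
    simp
  · have hne : lT_omega k ^ d ≠ 1 := fun hc => h ((lT_omega_zpow_eq_one_iff hk d).mp hc)
    rw [geom_sum_eq hne]
    have hk1 : lT_omega k ^ (k:ℤ) = 1 := by
      rw [lT_omega_zpow_eq_one_iff hk]
    have : (lT_omega k ^ d) ^ k = 1 := by
      rw [← zpow_natCast (lT_omega k ^ d) k, ← _root_.zpow_mul, mul_comm, _root_.zpow_mul, hk1, _root_.one_zpow]
    rw [this]
    simp

lemma lT_conj (k : ℕ) : (starRingEnd ℂ) (lT_omega k) = (lT_omega k)⁻¹ := by
  rw [lT_omega, ← Complex.exp_conj, ← Complex.exp_neg]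
  congr 1
  have : ((2 * Real.pi * Complex.I / k) : ℂ) = ((2 * Real.pi / k : ℝ) : ℂ) * Complex.I := by
    push_cast; ring
  rw [this, _root_.map_mul, Complex.conj_I, Complex.conj_ofReal]
  push_cast; ring



section
variable {k : ℕ} [NeZero k]

lemma lT_dvd1 (hk : 0 < k) (x y : Fin k) :
    (k:ℤ) ∣ ((x.val:ℤ) - y.val) ↔ x = y := by
  constructor
  · rintro ⟨m, hm⟩
    have hx := x.isLt; have hy := y.isLt
    have h1 : (m:ℤ) < 1 := by
      have : (k:ℤ) * m < (k:ℤ) * 1 := by omega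
      exact lt_of_mul_lt_mul_left this (by positivity)
    have h2 : (-1:ℤ) < m := by
      have : (k:ℤ) * (-1) < (k:ℤ) * m := by omega
      exact lt_of_mul_lt_mul_left this (by positivity)
    have hm0 : m = 0 := by omega
    subst hm0
    simp only [mul_zero] at hm
    exact Fin.ext (by omega)
  · rintro rfl; simp

lemma lT_val_add_one (hk : 3 ≤ k) (x : Fin k) :
    (x + 1).val = (x.val + 1) % k := by
  have h1 : (1 : Fin k).val = 1 := by
    rw [Fin.val_one', Nat.mod_eq_of_lt (by omega : 1 < k)]
  rw [Fin.val_add, h1]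

lemma lT_mod_eq (hk : 3 ≤ k) (x : Fin k) :
    (x.val + 1) % k = if x.val + 1 < k then x.val + 1 else 0 := by
  have hx := x.isLt
  split_ifs with h
  · exact Nat.mod_eq_of_lt h
  · have : x.val + 1 = k := by omega
    rw [this, Nat.mod_self]

lemma lT_dvd2 (hk : 3 ≤ k) (x y : Fin k) :
    ((k:ℤ) ∣ ((x.val:ℤ) - y.val + 1) ↔ y = x + 1) := by
  have hx := x.isLt; have hy := y.isLt
  have hval := lT_val_add_one hk x
  rw [lT_mod_eq hk x] at hval
  constructor
  · rintro ⟨m, hm⟩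
    have h1 : (m:ℤ) < 2 := by
      have : (k:ℤ) * m < (k:ℤ) * 2 := by omega
      exact lt_of_mul_lt_mul_left this (by positivity)
    have h2 : (-1:ℤ) < m := by
      have : (k:ℤ) * (-1) < (k:ℤ) * m := by omega
      exact lt_of_mul_lt_mul_left this (by positivity)
    have hm0 : m = 0 ∨ m = 1 := by omega
    apply (Fin.ext_iff).mpr
    rw [hval]
    split_ifs with h
    · rcases hm0 with rfl | rfl <;> omega
    · rcases hm0 with rfl | rfl <;> omega
  · rintro rfl
    rw [Fin.val_add] at *
    split_ifs at hval with h
    · exact ⟨0, by omega⟩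
    · exact ⟨1, by omega⟩

end





lemma lT_key {k : ℕ} [NeZero k] (hk : 3 ≤ k) (t c : ℝ)
    (htc : t + 2*c = k)
    (hpos : ∀ j : ℕ, 1 ≤ j → j < k → 0 ≤ t + 2*c*Real.cos (2*π*j/k))
    (v : Fin k → ℝ) :
    (∑ x, v x)^2 ≤ t * (∑ x, (v x)^2) + 2*c * (∑ x, v x * v (x+1)) := by
  have hk0 : 0 < k := by omega
  have hkR : (0:ℝ) < k := by exact_mod_cast hk0
  set ω := lT_omega k with hω
  have hω0 : ω ≠ 0 := lT_omega_ne_zero k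
  set F : ℕ → ℂ := fun j => ∑ x : Fin k, (v x : ℂ) * (ω ^ (x.val:ℤ)) ^ j with hF
  -- conjugate
  have hconj : ∀ j : ℕ, (starRingEnd ℂ) (F j)
      = ∑ y : Fin k, (v y : ℂ) * (ω ^ (-(y.val:ℤ))) ^ j := by
    intro j
    rw [hF, map_sum]
    refine Finset.sum_congr rfl fun y _ => ?_
    rw [_root_.map_mul, Complex.conj_ofReal, map_pow, map_zpow₀, lT_conj,
      _root_.inv_zpow, ← _root_.zpow_neg]
  -- product expansion
  have hFF : ∀ j : ℕ, F j * (starRingEnd ℂ) (F j)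
      = ∑ x : Fin k, ∑ y : Fin k,
          ((v x * v y : ℝ):ℂ) * (ω ^ ((x.val:ℤ) - y.val)) ^ j := by
    intro j
    rw [hconj j, hF, Finset.sum_mul_sum]
    refine Finset.sum_congr rfl fun x _ => Finset.sum_congr rfl fun y _ => ?_
    push_cast
    rw [mul_mul_mul_comm, ← mul_pow, ← zpow_add₀ hω0, sub_eq_add_neg]
  -- N
  set N : ℕ → ℝ := fun j => Complex.normSq (F j) with hN
  have hNnn : ∀ j, 0 ≤ N j := fun j => Complex.normSq_nonneg _
  have hmc : ∀ j, F j * (starRingEnd ℂ) (F j) = ((N j : ℝ) : ℂ) := fun j =>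
    Complex.mul_conj _
  -- Identity I
  have hI : ∑ j ∈ Finset.range k, N j = k * ∑ x, (v x)^2 := by
    have : ∑ j ∈ Finset.range k, ((N j : ℝ):ℂ) = (k:ℂ) * ∑ x : Fin k, ((v x:ℂ))^2 := by
      simp only [← hmc, hFF]
      rw [Finset.sum_comm]
      have : ∀ x : Fin k, ∑ j ∈ Finset.range k, ∑ y : Fin k,
          ((v x * v y : ℝ):ℂ) * (ω ^ ((x.val:ℤ) - y.val)) ^ j
          = (k:ℂ) * ((v x:ℂ))^2 := by
        intro x
        rw [Finset.sum_comm]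
        have h1 : ∀ y : Fin k, ∑ j ∈ Finset.range k,
            ((v x * v y : ℝ):ℂ) * (ω ^ ((x.val:ℤ) - y.val)) ^ j
            = ((v x * v y : ℝ):ℂ) * (if (k:ℤ) ∣ ((x.val:ℤ) - y.val) then (k:ℂ) else 0) := by
          intro y
          rw [← Finset.mul_sum, lT_geom hk0]
        rw [Finset.sum_congr rfl fun y _ => h1 y]
        rw [Finset.sum_eq_single x]
        · rw [if_pos ((lT_dvd1 hk0 x x).mpr rfl)]; push_cast; ring
        · intro y _ hy
          rw [if_neg (fun hc => hy ((lT_dvd1 hk0 x y).mp hc).symm), mul_zero]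
        · intro hx; exact absurd (Finset.mem_univ x) hx
      rw [Finset.sum_congr rfl fun x _ => this x, ← Finset.mul_sum]
    have := this
    push_cast at this
    exact_mod_cast this
  -- Identity II
  have hreω : ∀ j:ℕ, (ω^j).re = Real.cos (2*π*j/k) := by
    intro j
    rw [hω, lT_omega, ← Complex.exp_nat_mul]
    have : (j:ℂ) * (2*Real.pi*Complex.I/k) = ((2*π*j/k:ℝ):ℂ)*Complex.I := by
      push_cast; field_simp
    rw [this, Complex.exp_ofReal_mul_I_re]
  have hII : ∑ j ∈ Finset.range k, Real.cos (2*π*j/k) * N j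
      = k * ∑ x : Fin k, v x * v (x+1) := by
    have hC : ∑ j ∈ Finset.range k, ω^j * ((N j : ℝ):ℂ)
        = ((k * ∑ x : Fin k, v x * v (x+1) : ℝ) : ℂ) := by
      simp only [← hmc, hFF]
      have step : ∀ j ∈ Finset.range k, ω^j * (∑ x : Fin k, ∑ y : Fin k,
          ((v x * v y : ℝ):ℂ) * (ω ^ ((x.val:ℤ) - y.val)) ^ j)
          = ∑ x : Fin k, ∑ y : Fin k,
            ((v x * v y : ℝ):ℂ) * (ω ^ ((x.val:ℤ) - y.val + 1)) ^ j := by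
        intro j _
        rw [Finset.mul_sum]
        refine Finset.sum_congr rfl fun x _ => ?_
        rw [Finset.mul_sum]
        refine Finset.sum_congr rfl fun y _ => ?_
        have : ω ^ j = (ω ^ (1:ℤ)) ^ j := by norm_num
        rw [this, mul_left_comm, ← mul_pow, ← zpow_add₀ hω0, add_comm (1:ℤ)]
      rw [Finset.sum_congr rfl step, Finset.sum_comm]
      have inner : ∀ x : Fin k, ∑ j ∈ Finset.range k, ∑ y : Fin k,
          ((v x * v y : ℝ):ℂ) * (ω ^ ((x.val:ℤ) - y.val + 1)) ^ j
          = (k:ℂ) * ((v x * v (x+1) : ℝ):ℂ) := by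
        intro x
        rw [Finset.sum_comm]
        have h1 : ∀ y : Fin k, ∑ j ∈ Finset.range k,
            ((v x * v y : ℝ):ℂ) * (ω ^ ((x.val:ℤ) - y.val + 1)) ^ j
            = ((v x * v y : ℝ):ℂ) * (if (k:ℤ) ∣ ((x.val:ℤ) - y.val + 1) then (k:ℂ) else 0) := by
          intro y
          rw [← Finset.mul_sum, lT_geom hk0]
        rw [Finset.sum_congr rfl fun y _ => h1 y]
        rw [Finset.sum_eq_single (x+1)]
        · rw [if_pos ((lT_dvd2 hk x (x+1)).mpr rfl)]; ring
        · intro y _ hy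
          rw [if_neg (fun hc => hy ((lT_dvd2 hk x y).mp hc)), mul_zero]
        · intro hx; exact absurd (Finset.mem_univ _) hx
      rw [Finset.sum_congr rfl fun x _ => inner x, ← Finset.mul_sum]
      push_cast
      ring
    have := congrArg Complex.re hC
    rw [Complex.re_sum] at this
    simp only [Complex.mul_re, Complex.ofReal_re, Complex.ofReal_im, mul_zero, sub_zero,
      hreω] at this
    exact this
  -- Identity III
  have hIII : N 0 = (∑ x, v x)^2 := by
    have hF0 : F 0 = ((∑ x, v x : ℝ) : ℂ) := by
      rw [hF]; push_cast; simp
    rw [hN]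
    simp only [hF0, Complex.normSq_ofReal]
    ring
  -- conclusion
  have hcoeff : ∀ j ∈ Finset.range k, 0 ≤ (t + 2*c*Real.cos (2*π*j/k)) * N j := by
    intro j hj
    rw [Finset.mem_range] at hj
    rcases Nat.eq_zero_or_pos j with rfl | hj1
    · have : Real.cos (2*π*(0:ℕ)/k) = 1 := by norm_num
      rw [this]
      have : t + 2*c*1 = (k:ℝ) := by linarith
      rw [this]
      exact mul_nonneg (le_of_lt hkR) (hNnn 0)
    · exact mul_nonneg (hpos j hj1 hj) (hNnn j)
  have hsplit : ∑ j ∈ Finset.range k, (t + 2*c*Real.cos (2*π*j/k)) * N j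
      = t * (k * (∑ x, (v x)^2)) + 2*c * (k * (∑ x, v x * v (x+1))) := by
    rw [← hI, ← hII]
    rw [Finset.mul_sum, Finset.mul_sum, ← Finset.sum_add_distrib]
    refine Finset.sum_congr rfl fun j _ => ?_
    ring
  have hzero_le : (k:ℝ) * ((∑ x, v x)^2)
      ≤ ∑ j ∈ Finset.range k, (t + 2*c*Real.cos (2*π*j/k)) * N j := by
    have h0 : (0:ℕ) ∈ Finset.range k := Finset.mem_range.mpr hk0
    have := Finset.single_le_sum hcoeff h0
    have hc0 : Real.cos (2*π*(0:ℕ)/k) = 1 := by norm_num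
    calc (k:ℝ) * ((∑ x, v x)^2) = (t + 2*c*Real.cos (2*π*(0:ℕ)/k)) * N 0 := by
          rw [hc0, hIII]; linear_combination (-((∑ x, v x)^2)) * htc
      _ ≤ _ := this
  rw [hsplit] at hzero_le
  have h2 : (k:ℝ) * ((∑ x, v x)^2)
      ≤ (k:ℝ) * (t * (∑ x, (v x)^2) + 2*c*(∑ x, v x * v (x+1))) := by
    calc (k:ℝ) * ((∑ x, v x)^2)
        ≤ t * ((k:ℝ) * (∑ x, (v x)^2)) + 2*c * ((k:ℝ) * (∑ x, v x * v (x+1))) := hzero_le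
      _ = _ := by ring
  exact le_of_mul_le_mul_left h2 hkR

lemma lT_upper {k : ℕ} [NeZero k] (hk : 3 ≤ k) (t c : ℝ)
    (htc : t + 2*c = k)
    (hpos : ∀ j : ℕ, 1 ≤ j → j < k → 0 ≤ t + 2*c*Real.cos (2*π*j/k))
    (B : Matrix (Fin k) (Fin k) ℝ) (hpsd : B.PosSemidef)
    (htr : ∑ i, B i i = 1) (hedge : ∀ i, B i (i+1) = 0) :
    ∑ i, ∑ j, B i j ≤ t := by
  obtain ⟨A, rfl⟩ : ∃ A : Matrix (Fin k) (Fin k) ℝ, B = Aᴴ * A := by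
    open scoped MatrixOrder in exact CStarAlgebra.nonneg_iff_eq_star_mul_self.mp hpsd.nonneg
  have hent : ∀ i j, (Aᴴ * A) i j = ∑ m, A m i * A m j := by
    intro i j
    simp [Matrix.mul_apply, Matrix.conjTranspose_apply]
  have hsum : ∑ i, ∑ j, (Aᴴ * A) i j = ∑ m, (∑ i, A m i)^2 := by
    simp only [hent]
    have h1 : ∀ i : Fin k, ∑ j, ∑ m, A m i * A m j = ∑ m, A m i * ∑ j, A m j := by
      intro i
      rw [Finset.sum_comm]
      exact Finset.sum_congr rfl fun m _ => (Finset.mul_sum _ _ _).symm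
    rw [Finset.sum_congr rfl fun i _ => h1 i, Finset.sum_comm]
    refine Finset.sum_congr rfl fun m _ => ?_
    rw [← Finset.sum_mul, sq]
  have htr' : ∑ m, (∑ i, (A m i)^2) = 1 := by
    rw [← htr]
    rw [Finset.sum_comm]
    refine Finset.sum_congr rfl fun i _ => ?_
    rw [hent]
    exact Finset.sum_congr rfl fun m _ => (sq (A m i) ▸ (pow_two (A m i)).symm)
  have hedge' : ∑ m, (∑ i, A m i * A m (i+1)) = 0 := by
    rw [Finset.sum_comm]
    calc ∑ i, ∑ m, A m i * A m (i+1) = ∑ i : Fin k, (Aᴴ * A) i (i+1) := by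
          refine Finset.sum_congr rfl fun i _ => (hent i (i+1)).symm
      _ = 0 := Finset.sum_eq_zero fun i _ => hedge i
  rw [hsum]
  calc ∑ m, (∑ i, A m i)^2
      ≤ ∑ m, (t * (∑ i, (A m i)^2) + 2*c * (∑ i, A m i * A m (i+1))) :=
        Finset.sum_le_sum fun m _ => lT_key hk t c htc hpos (A m)
    _ = t * (∑ m, (∑ i, (A m i)^2)) + 2*c * (∑ m, (∑ i, A m i * A m (i+1))) := by
        rw [Finset.sum_add_distrib, ← Finset.mul_sum, ← Finset.mul_sum]
    _ = t := by rw [htr', hedge']; ring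

lemma lT_psd_outer {k : ℕ} {ι : Type*} [Fintype ι] (f : ι → Fin k → ℝ) :
    Matrix.PosSemidef (Matrix.of fun x y => ∑ m, f m x * f m y) := by
  rw [Matrix.posSemidef_iff_dotProduct_mulVec]
  constructor
  · ext x y
    simp only [Matrix.conjTranspose_apply, Matrix.of_apply, star_trivial]
    exact Finset.sum_congr rfl fun m _ => mul_comm _ _
  · intro x
    have hcalc : star x ⬝ᵥ ((Matrix.of fun x y => ∑ m, f m x * f m y) *ᵥ x)
        = ∑ m, (∑ i, f m i * x i)^2 := by
      simp only [dotProduct, Matrix.mulVec, Pi.star_apply, star_trivial,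
        Matrix.of_apply]
      calc ∑ i, x i * ∑ j, (∑ m, f m i * f m j) * x j
          = ∑ i, ∑ j, ∑ m, (f m i * x i) * (f m j * x j) := by
            refine Finset.sum_congr rfl fun i _ => ?_
            rw [Finset.mul_sum]
            refine Finset.sum_congr rfl fun j _ => ?_
            rw [Finset.sum_mul, Finset.mul_sum]
            exact Finset.sum_congr rfl fun m _ => by ring
        _ = ∑ i, ∑ m, ∑ j, (f m i * x i) * (f m j * x j) :=
            Finset.sum_congr rfl fun i _ => Finset.sum_comm
        _ = ∑ m, ∑ i, ∑ j, (f m i * x i) * (f m j * x j) := Finset.sum_comm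
        _ = ∑ m, (∑ i, f m i * x i)^2 := by
            refine Finset.sum_congr rfl fun m _ => ?_
            rw [sq, Finset.sum_mul_sum]
    rw [hcalc]
    exact Finset.sum_nonneg fun m _ => sq_nonneg _

lemma lT_count (a : ℝ) (n : ℕ) :
    ∑ i ∈ Finset.range n, (if i % 2 = 0 then a else 0) = ((n+1)/2 : ℕ) * a := by
  induction n with
  | zero => simp
  | succ n ih =>
    rw [Finset.sum_range_succ, ih]
    rcases Nat.even_or_odd n with h | h
    · have h0 : n % 2 = 0 := Nat.even_iff.mp h
      have h1 : (n+1+1)/2 = (n+1)/2 + 1 := by omega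
      rw [if_pos h0, h1]
      push_cast
      ring
    · have h0 : n % 2 = 1 := Nat.odd_iff.mp h
      have h1 : (n+1+1)/2 = (n+1)/2 := by omega
      rw [if_neg (by omega), h1, add_zero]

lemma lT_cosbound_aux {k : ℕ} (hk : 3 ≤ k) (j : ℕ) (h2 : 2*j+1 ≤ k) :
    Real.cos (π - π/k) ≤ Real.cos (2*π*j/k) := by
  have hkR : (0:ℝ) < k := by positivity
  have hj : (2*(j:ℝ)+1) ≤ k := by exact_mod_cast h2
  have key : 2*π*j/k + π/k ≤ π := by
    rw [← add_div, div_le_iff₀ hkR]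
    nlinarith [Real.pi_pos]
  have hπk : 0 < π/k := by positivity
  exact Real.cos_le_cos_of_nonneg_of_le_pi (by positivity) (by linarith) (by linarith)

lemma lT_cosbound {k : ℕ} (hk : 3 ≤ k) (hodd : Odd k) (j : ℕ) (h1 : 1 ≤ j) (h2 : j < k) :
    -Real.cos (π/k) ≤ Real.cos (2*π*j/k) := by
  have hkR : (0:ℝ) < k := by positivity
  rw [← Real.cos_pi_sub]
  rcases Nat.lt_or_ge (2*j) k with h | h
  · exact lT_cosbound_aux hk j (by omega)
  · have hne : 2*j ≠ k := fun hc => (Nat.not_odd_iff_even.mpr ⟨j, by omega⟩) (hc ▸ hodd)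
    set j' := k - j with hj'
    have hjj : j + j' = k := by omega
    have h2j' : 2*j'+1 ≤ k := by omega
    have hcast : (j:ℝ) = k - j' := by
      have : (j:ℝ) + j' = k := by exact_mod_cast hjj
      linarith
    have harg : 2*π*j/k = 2*π - 2*π*j'/k := by
      rw [hcast]
      field_simp
    rw [harg, Real.cos_two_pi_sub]
    exact lT_cosbound_aux hk j' h2j'

lemma lT_even_ach {k : ℕ} [NeZero k] (hk : 3 ≤ k) (heven : Even k) :
    ∃ B : Matrix (Fin k) (Fin k) ℝ, B.IsSymm ∧ B.PosSemidef ∧ (∑ i, B i i) = 1 ∧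
      (∀ i j : Fin k, (SimpleGraph.fromRel (fun i j : Fin k => j = i + 1)).Adj i j → B i j = 0) ∧
      (k:ℝ)/2 = ∑ i, ∑ j, B i j := by
  obtain ⟨m, hm⟩ := heven
  have hm2 : 2 ≤ m := by omega
  have hkR : (0:ℝ) < k := by positivity
  set u : Fin k → ℝ := fun x => if x.val % 2 = 0 then Real.sqrt (2/k) else 0 with hu
  set B : Matrix (Fin k) (Fin k) ℝ := Matrix.of fun x y => u x * u y with hB
  have hBapp : ∀ x y, B x y = u x * u y := fun x y => rfl
  have hedge : ∀ x : Fin k, u x * u (x+1) = 0 := by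
    intro x
    have hval : (x+1).val = (x.val+1) % k := lT_val_add_one hk x
    have hx := x.isLt
    by_cases hxp : x.val % 2 = 0
    · have hnot : ¬ ((x+1).val % 2 = 0) := by
        rw [hval]
        rcases Nat.lt_or_ge (x.val+1) k with h | h
        · rw [Nat.mod_eq_of_lt h]; omega
        · omega
      simp [hu, hxp, hnot]
    · simp [hu, hxp]
  refine ⟨B, ?_, ?_, ?_, ?_, ?_⟩
  · rw [Matrix.IsSymm]
    ext x y
    simp only [Matrix.transpose_apply, hBapp]
    ring
  · have : B = Matrix.of fun x y => ∑ m : Fin 1, (fun _ : Fin 1 => u) m x * (fun _ : Fin 1 => u) m y := by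
      ext x y; simp [hBapp]
    rw [this]
    exact lT_psd_outer _
  · have h1 : ∀ i : Fin k, B i i = if i.val % 2 = 0 then 2/(k:ℝ) else 0 := by
      intro i
      by_cases h : i.val % 2 = 0
      · simp only [hBapp, hu, if_pos h]
        exact Real.mul_self_sqrt (by positivity)
      · simp [hBapp, hu, h]
    rw [Finset.sum_congr rfl fun i _ => h1 i]
    rw [Fin.sum_univ_eq_sum_range (fun n => if n % 2 = 0 then 2/(k:ℝ) else 0), lT_count]
    have : (k+1)/2 = m := by omega
    rw [this, hm]
    have hmR : (0:ℝ) < m := by positivity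
    push_cast
    field_simp
    ring
  · intro i j hadj
    rw [SimpleGraph.fromRel_adj] at hadj
    obtain ⟨hne, hcase⟩ := hadj
    rcases hcase with rfl | rfl
    · exact hedge i
    · rw [hBapp, mul_comm, ← hBapp]
      exact hedge j
  · have hsall : ∑ x, u x = m * Real.sqrt (2/k) := by
      rw [hu, Fin.sum_univ_eq_sum_range (fun n => if n % 2 = 0 then Real.sqrt (2/(k:ℝ)) else 0), lT_count]
      have : (k+1)/2 = m := by omega
      rw [this]
    have hss : ∑ i, ∑ j, B i j = (∑ x, u x) * (∑ y, u y) := by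
      rw [Finset.sum_mul_sum]
      exact Finset.sum_congr rfl fun i _ => Finset.sum_congr rfl fun j _ => hBapp i j
    rw [hss, hsall]
    have hsq : Real.sqrt (2/k) * Real.sqrt (2/k) = 2/k := Real.mul_self_sqrt (by positivity)
    have hmR : (0:ℝ) < m := by positivity
    have hkm : (k:ℝ) = 2*m := by rw [hm]; push_cast; ring
    have h1 : ((m:ℝ) * Real.sqrt (2/k)) * ((m:ℝ) * Real.sqrt (2/k)) = (m:ℝ)*(m:ℝ)*(2/k) := by
      linear_combination ((m:ℝ)*(m:ℝ))*hsq
    rw [h1, hkm]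
    field_simp

lemma lT_odd_ach {k : ℕ} [NeZero k] (hk : 3 ≤ k) (hodd : Odd k) :
    ∃ B : Matrix (Fin k) (Fin k) ℝ, B.IsSymm ∧ B.PosSemidef ∧ (∑ i, B i i) = 1 ∧
      (∀ i j : Fin k, (SimpleGraph.fromRel (fun i j : Fin k => j = i + 1)).Adj i j → B i j = 0) ∧
      (k:ℝ) * Real.cos (π/k) / (1 + Real.cos (π/k)) = ∑ i, ∑ j, B i j := by
  obtain ⟨m, hm⟩ : ∃ m, k = 2*m+3 := by
    obtain ⟨n, hn⟩ := hodd; exact ⟨n - 1, by omega⟩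
  have hkR : (0:ℝ) < k := by positivity
  have hk0 : (k:ℝ) ≠ 0 := hkR.ne'
  have hkcast : (k:ℝ) = 2*(m:ℝ)+3 := by rw [hm]; push_cast; ring
  set γ : ℝ := Real.cos (π/k) with hγdef
  have hγ : 0 < γ := by
    apply Real.cos_pos_of_mem_Ioo
    constructor
    · have : 0 < π/k := by positivity
      linarith [Real.pi_pos]
    · have h3 : π/k ≤ π/3 := by
        apply div_le_div_of_nonneg_left Real.pi_pos.le (by norm_num)
        exact_mod_cast hk
      linarith [Real.pi_pos]
  have h1γ : 0 < 1 + γ := by linarith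
  set θ : ℝ := π*((k:ℝ)-1)/k with hθdef
  have hθ : θ = π - π/k := by rw [hθdef]; field_simp
  set α : ℝ := γ/(1+γ) with hαdef
  set β : ℝ := 1/(2*(1+γ)) with hβdef
  have hα : 0 ≤ α := by positivity
  have hβ : 0 ≤ β := by positivity
  set B : Matrix (Fin k) (Fin k) ℝ := Matrix.of fun x y =>
    α/k + (2*β/k) * (Real.cos (θ*x.val) * Real.cos (θ*y.val)
      + Real.sin (θ*x.val) * Real.sin (θ*y.val)) with hBdef
  have hBapp : ∀ x y, B x y = α/k + (2*β/k) * (Real.cos (θ*x.val) * Real.cos (θ*y.val)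
      + Real.sin (θ*x.val) * Real.sin (θ*y.val)) := fun x y => rfl
  have hBcos : ∀ x y, B x y = α/k + (2*β/k) * Real.cos (θ*x.val - θ*y.val) := by
    intro x y
    rw [hBapp, Real.cos_sub]
  -- edge value
  have hcosθ : Real.cos θ = -γ := by rw [hθ, Real.cos_pi_sub]
  have hcosθk1 : Real.cos (θ*((k:ℝ)-1)) = -γ := by
    have harg : θ*((k:ℝ)-1) = (π/(k:ℝ) + π) + (m:ℕ)*(2*π) := by
      rw [hθdef]
      field_simp
      rw [hkcast]
      ring
    rw [harg, Real.cos_add_nat_mul_two_pi, Real.cos_add_pi]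
  have hval0 : α/k + (2*β/k)*(-γ) = 0 := by
    rw [hαdef, hβdef]
    field_simp
    ring
  have hedge : ∀ x : Fin k, B x (x+1) = 0 := by
    intro x
    have hval : (x+1).val = (x.val+1) % k := lT_val_add_one hk x
    have hx := x.isLt
    rcases Nat.lt_or_ge (x.val+1) k with h | h
    · have hj : ((x+1).val : ℝ) = (x.val:ℝ) + 1 := by
        rw [hval, Nat.mod_eq_of_lt h]; push_cast; ring
      rw [hBcos, hj]
      have : θ*(x.val:ℝ) - θ*((x.val:ℝ)+1) = -θ := by ring
      rw [this, Real.cos_neg, hcosθ]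
      exact hval0
    · have hxv : x.val = k - 1 := by omega
      have hj : ((x+1).val : ℝ) = 0 := by
        have h1 : x.val+1 = k := by omega
        rw [hval, h1, Nat.mod_self]; norm_num
      have hxr : ((x.val:ℕ) : ℝ) = (k:ℝ) - 1 := by
        rw [hxv]; push_cast [Nat.cast_sub (by omega : 1 ≤ k)]; ring
      rw [hBcos, hj, hxr]
      have : θ*((k:ℝ)-1) - θ*0 = θ*((k:ℝ)-1) := by ring
      rw [this, hcosθk1]
      exact hval0
  have hBsymm : ∀ x y, B x y = B y x := by
    intro x y; rw [hBapp, hBapp]; ring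
  -- Fourier sums vanish
  set z : ℂ := Complex.exp ((θ:ℂ) * Complex.I) with hzdef
  have hz1 : z ≠ 1 := by
    rw [hzdef, Ne, Complex.exp_eq_one_iff]
    rintro ⟨n, hn⟩
    have hθI : ((θ:ℝ):ℂ) = (n:ℂ)*(2*(π:ℝ)) := by
      apply mul_right_cancel₀ Complex.I_ne_zero
      rw [hn]; ring
    have hθr : θ = (n:ℝ)*(2*π) := by exact_mod_cast hθI
    have hθpos : 0 < θ := by
      rw [hθ]
      have h3 : π/k ≤ π/3 := by
        apply div_le_div_of_nonneg_left Real.pi_pos.le (by norm_num)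
        exact_mod_cast hk
      linarith [Real.pi_pos]
    have hθlt : θ < 2*π := by
      rw [hθ]
      have : 0 < π/k := by positivity
      linarith [Real.pi_pos]
    have hn1 : (0:ℝ) < (n:ℝ) := by nlinarith [Real.pi_pos]
    have hn2 : (n:ℝ) < 1 := by nlinarith [Real.pi_pos]
    have h1 : (0:ℤ) < n := by exact_mod_cast hn1
    have h2 : (n:ℤ) < 1 := by exact_mod_cast hn2
    omega
  have hzk : z ^ k = 1 := by
    rw [hzdef, ← Complex.exp_nat_mul]
    have : (k:ℂ) * ((θ:ℂ) * Complex.I) = ((m+1:ℕ):ℂ) * (2*(π:ℝ)*Complex.I) := by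
      have hreal : (k:ℝ) * θ = ((m+1:ℕ):ℝ) * (2*π) := by
        rw [hθdef]
        field_simp
        rw [hkcast]
        push_cast
        ring
      calc (k:ℂ) * ((θ:ℂ) * Complex.I) = (((k:ℝ)*θ : ℝ):ℂ) * Complex.I := by push_cast; ring
        _ = ((m+1:ℕ):ℂ) * (2*(π:ℝ)*Complex.I) := by rw [hreal]; push_cast; ring
    rw [this]
    exact Complex.exp_nat_mul_two_pi_mul_I (m+1)
  have hgeom : ∑ x ∈ Finset.range k, z^x = 0 := by
    rw [geom_sum_eq hz1, hzk]
    simp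
  have hzx : ∀ x : ℕ, z^x = Complex.exp (((θ*x : ℝ):ℂ) * Complex.I) := by
    intro x
    rw [hzdef, ← Complex.exp_nat_mul]
    push_cast
    ring_nf
  have htermre : ∀ x : ℕ, (z^x).re = Real.cos (θ*x) := by
    intro x; rw [hzx x, Complex.exp_ofReal_mul_I_re]
  have htermim : ∀ x : ℕ, (z^x).im = Real.sin (θ*x) := by
    intro x; rw [hzx x, Complex.exp_ofReal_mul_I_im]
  have hcos0 : ∑ x ∈ Finset.range k, Real.cos (θ*x) = 0 := by
    have hre := congrArg Complex.re hgeom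
    rw [Complex.re_sum, Complex.zero_re] at hre
    exact (Finset.sum_congr rfl (fun x _ => (htermre x).symm)).trans hre
  have hsin0 : ∑ x ∈ Finset.range k, Real.sin (θ*x) = 0 := by
    have him := congrArg Complex.im hgeom
    rw [Complex.im_sum, Complex.zero_im] at him
    exact (Finset.sum_congr rfl (fun x _ => (htermim x).symm)).trans him
  have hSc : ∑ y : Fin k, Real.cos (θ*y.val) = 0 := by
    rw [Fin.sum_univ_eq_sum_range (fun n => Real.cos (θ*n))]; exact hcos0
  have hSs : ∑ y : Fin k, Real.sin (θ*y.val) = 0 := by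
    rw [Fin.sum_univ_eq_sum_range (fun n => Real.sin (θ*n))]; exact hsin0
  -- assemble
  refine ⟨B, ?_, ?_, ?_, ?_, ?_⟩
  · rw [Matrix.IsSymm]
    ext x y
    rw [Matrix.transpose_apply]
    exact hBsymm y x
  · set f : Fin 3 → Fin k → ℝ :=
      ![fun _ => Real.sqrt (α/k),
        fun x => Real.sqrt (2*β/k) * Real.cos (θ*x.val),
        fun x => Real.sqrt (2*β/k) * Real.sin (θ*x.val)] with hfdef
    have h1 : Real.sqrt (α/k) * Real.sqrt (α/k) = α/k := Real.mul_self_sqrt (by positivity)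
    have h2 : Real.sqrt (2*β/k) * Real.sqrt (2*β/k) = 2*β/k := Real.mul_self_sqrt (by positivity)
    have hBf : B = Matrix.of fun x y => ∑ m, f m x * f m y := by
      ext x y
      rw [hBapp, Matrix.of_apply, Fin.sum_univ_three]
      simp only [hfdef, Matrix.cons_val_zero, Matrix.cons_val_one, Matrix.head_cons,
        Matrix.cons_val_two, Matrix.tail_cons]
      rw [mul_mul_mul_comm (Real.sqrt (2*β/k)) _ (Real.sqrt (2*β/k)) _, h2,
        mul_mul_mul_comm (Real.sqrt (2*β/k)) _ (Real.sqrt (2*β/k)) _, h2, h1]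
      ring
    rw [hBf]
    exact lT_psd_outer f
  · have hdiag : ∀ i : Fin k, B i i = α/k + 2*β/k := by
      intro i
      rw [hBcos, sub_self, Real.cos_zero, mul_one]
    rw [Finset.sum_congr rfl fun i _ => hdiag i, Finset.sum_const, Finset.card_univ,
      Fintype.card_fin, nsmul_eq_mul]
    rw [hαdef, hβdef]
    field_simp
    ring
  · intro i j hadj
    rw [SimpleGraph.fromRel_adj] at hadj
    obtain ⟨hne, hcase⟩ := hadj
    rcases hcase with rfl | rfl
    · exact hedge i
    · rw [hBsymm]; exact hedge j
  · have hrow : ∀ x : Fin k, ∑ y, B x y = α := by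
      intro x
      have hexp : ∑ y : Fin k, B x y
          = (∑ _y : Fin k, (α/k))
            + (2*β/k) * Real.cos (θ*x.val) * (∑ y : Fin k, Real.cos (θ*y.val))
            + (2*β/k) * Real.sin (θ*x.val) * (∑ y : Fin k, Real.sin (θ*y.val)) := by
        rw [Finset.mul_sum, Finset.mul_sum, ← Finset.sum_add_distrib, ← Finset.sum_add_distrib]
        refine Finset.sum_congr rfl fun y _ => ?_
        rw [hBapp]
        ring
      rw [hexp, hSc, hSs, Finset.sum_const, Finset.card_univ, Fintype.card_fin, nsmul_eq_mul]
      field_simp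
      ring
    rw [Finset.sum_congr rfl fun x _ => hrow x, Finset.sum_const, Finset.card_univ,
      Fintype.card_fin, nsmul_eq_mul]
    rw [hαdef]
    ring

/-- **Lovász theta number of the cycle graph `C_k`.**
For the cycle graph on `k ≥ 3` vertices (vertex `i` adjacent to `i + 1` modulo `k`),
the Lovász theta number equals `k·cos(π/k)/(1 + cos(π/k))` for odd `k`,
and `k/2` for even `k`. -/
theorem lovasz_theta_cycle {k : ℕ} [NeZero k] (hk : 3 ≤ k)
    (Γ : SimpleGraph (Fin k))
    (hΓ : Γ = SimpleGraph.fromRel (fun i j : Fin k => j = i + 1))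
    (theta : ℝ)
    (htheta : theta = sSup {y : ℝ | ∃ B : Matrix (Fin k) (Fin k) ℝ,
      B.IsSymm ∧ B.PosSemidef ∧ (∑ i, B i i) = 1 ∧
      (∀ i j, Γ.Adj i j → B i j = 0) ∧ y = ∑ i, ∑ j, B i j}) :
    (Odd k → theta = (k : ℝ) * Real.cos (π / k) / (1 + Real.cos (π / k))) ∧
    (Even k → theta = (k : ℝ) / 2) := by
  subst hΓ
  subst htheta
  have hkR : (0:ℝ) < k := by positivity
  have hne1 : ∀ i : Fin k, i ≠ i + 1 := by
    intro i h
    have h1 : (1 : Fin k) = 0 := left_eq_add.mp h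
    have h2 := congrArg Fin.val h1
    rw [Fin.val_one', Fin.val_zero, Nat.mod_eq_of_lt (by omega : 1 < k)] at h2
    omega
  have hadj : ∀ i : Fin k,
      (SimpleGraph.fromRel (fun i j : Fin k => j = i + 1)).Adj i (i+1) := by
    intro i
    rw [SimpleGraph.fromRel_adj]
    exact ⟨hne1 i, Or.inl rfl⟩
  constructor
  · intro hodd
    set γ : ℝ := Real.cos (π/k) with hγdef
    have hγ : 0 < γ := by
      apply Real.cos_pos_of_mem_Ioo
      constructor
      · have : 0 < π/k := by positivity
        linarith [Real.pi_pos]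
      · have h3 : π/k ≤ π/3 := by
          apply div_le_div_of_nonneg_left Real.pi_pos.le (by norm_num)
          exact_mod_cast hk
        linarith [Real.pi_pos]
    have h1γ : 0 < 1 + γ := by linarith
    set t : ℝ := (k:ℝ) * γ / (1 + γ) with htdef
    set c : ℝ := (k:ℝ) / (2*(1 + γ)) with hcdef
    have htc : t + 2*c = k := by
      rw [htdef, hcdef]
      field_simp
      ring
    have hpos : ∀ j : ℕ, 1 ≤ j → j < k → 0 ≤ t + 2*c*Real.cos (2*π*j/k) := by
      intro j hj1 hj2
      have hcos := lT_cosbound hk hodd j hj1 hj2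
      have heq : t + 2*c*Real.cos (2*π*j/k) = ((k:ℝ)/(1+γ)) * (γ + Real.cos (2*π*j/k)) := by
        rw [htdef, hcdef]
        field_simp
      rw [heq]
      apply mul_nonneg (div_nonneg hkR.le h1γ.le)
      rw [hγdef]
      linarith [hcos]
    apply IsGreatest.csSup_eq
    constructor
    · obtain ⟨B, h1, h2, h3, h4, h5⟩ := lT_odd_ach hk hodd
      exact ⟨B, h1, h2, h3, h4, h5⟩
    · rintro y ⟨B, hsym, hpsd, htr, hedge, rfl⟩
      exact lT_upper hk t c htc hpos B hpsd htr (fun i => hedge i (i+1) (hadj i))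
  · intro heven
    set t : ℝ := (k:ℝ)/2 with htdef
    set c : ℝ := (k:ℝ)/4 with hcdef
    have htc : t + 2*c = k := by rw [htdef, hcdef]; ring
    have hpos : ∀ j : ℕ, 1 ≤ j → j < k → 0 ≤ t + 2*c*Real.cos (2*π*j/k) := by
      intro j _ _
      have hc := Real.neg_one_le_cos (2*π*j/k)
      rw [htdef, hcdef]
      nlinarith [hkR.le]
    apply IsGreatest.csSup_eq
    constructor
    · obtain ⟨B, h1, h2, h3, h4, h5⟩ := lT_even_ach hk heven
      exact ⟨B, h1, h2, h3, h4, h5⟩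
    · rintro y ⟨B, hsym, hpsd, htr, hedge, rfl⟩
      exact lT_upper hk t c htc hpos B hpsd htr (fun i => hedge i (i+1) (hadj i))
end

section
/- For the cycle graph C_n on n ≥ 3 vertices, the semidefinite program defining the Lovász theta number is equivalent to the following linear program: ϑ(C_n) = sup{ n·x_0 : (x_0, …, x_{⌊n/2⌋}) ∈ ℝ^{⌊n/2⌋+1}, x_j ≥ 0 for all j, Σ_{j=0}^{⌊n/2⌋} x_j = 1, Σ_{j=0}^{⌊n/2⌋} x_j·cos(2jπ/n) = 0 }. -/
open Matrix Real

namespace LovaszCycleAux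

open Finset

lemma exp_sum (n : ℕ) (hn : 0 < n) (d : ℤ) :
    ∑ m ∈ Finset.range n, Complex.exp (2 * Real.pi * Complex.I * d * m / n)
      = if (n : ℤ) ∣ d then (n : ℂ) else 0 := by
  have hn' : (n : ℂ) ≠ 0 := Nat.cast_ne_zero.mpr hn.ne'
  have hterm : ∀ m : ℕ, Complex.exp (2 * Real.pi * Complex.I * d * m / n)
      = Complex.exp (2 * Real.pi * Complex.I * d / n) ^ m := by
    intro m
    rw [← Complex.exp_nat_mul]
    congr 1
    ring
  have hpow : Complex.exp (2 * Real.pi * Complex.I * d / n) ^ n = 1 := by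
    rw [← Complex.exp_nat_mul]
    have : (n : ℂ) * (2 * Real.pi * Complex.I * d / n) = d * (2 * Real.pi * Complex.I) := by
      field_simp
    rw [this, Complex.exp_int_mul_two_pi_mul_I]
  simp only [hterm]
  by_cases hd : (n : ℤ) ∣ d
  · obtain ⟨t, rfl⟩ := hd
    have h1 : Complex.exp (2 * Real.pi * Complex.I * ((n : ℤ) * t : ℤ) / n) = 1 := by
      have he : (2 * (Real.pi : ℂ) * Complex.I * (((n : ℤ) * t : ℤ) : ℂ) / n)
          = (t : ℂ) * (2 * Real.pi * Complex.I) := by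
        push_cast
        field_simp
      rw [show ((2 : ℂ) * Real.pi * Complex.I * (((n:ℤ) * t : ℤ) : ℂ) / n) = (t : ℂ) * (2 * Real.pi * Complex.I) from he,
        Complex.exp_int_mul_two_pi_mul_I]
    have h1' : Complex.exp (2 * Real.pi * Complex.I * ((n:ℂ) * t) / n) = 1 := by
      push_cast at h1; exact h1
    simp [h1', if_pos (Dvd.intro t rfl)]
  · have hr1 : Complex.exp (2 * Real.pi * Complex.I * d / n) ≠ 1 := by
      intro h
      rw [Complex.exp_eq_one_iff] at h
      obtain ⟨k, hk⟩ := h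
      apply hd
      refine ⟨k, ?_⟩
      have h2πI : (2 * (Real.pi : ℂ) * Complex.I) ≠ 0 := by
        simp [Real.pi_ne_zero, Complex.I_ne_zero]
      have hc : (d : ℂ) = n * k := by
        field_simp at hk
        have h3 : (2 * (Real.pi:ℂ) * Complex.I) * (d : ℂ)
            = (2 * (Real.pi:ℂ) * Complex.I) * ((n:ℂ) * k) := by
          linear_combination (2 * (Real.pi:ℂ) * Complex.I) * hk
        exact mul_left_cancel₀ h2πI h3
      exact_mod_cast hc
    rw [geom_sum_eq hr1, hpow]
    simp [hd]

lemma cos_sum (n : ℕ) (hn : 0 < n) (d : ℤ) :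
    (∑ m ∈ Finset.range n, Real.cos (2 * Real.pi * d * m / n)
      = if (n : ℤ) ∣ d then (n : ℝ) else 0)
    ∧ (∑ m ∈ Finset.range n, Real.sin (2 * Real.pi * d * m / n) = 0) := by
  have h := exp_sum n hn d
  have hterm : ∀ m : ℕ, Complex.exp (2 * Real.pi * Complex.I * d * m / n)
      = Complex.ofReal (Real.cos (2*Real.pi*d*m/n))
        + Complex.ofReal (Real.sin (2*Real.pi*d*m/n)) * Complex.I := by
    intro m
    rw [show (2 * (Real.pi:ℂ) * Complex.I * d * m / n)
        = ((2*Real.pi*d*m/n : ℝ) : ℂ) * Complex.I by push_cast; ring]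
    rw [Complex.exp_mul_I]
    norm_cast
  simp only [hterm] at h
  rw [Finset.sum_add_distrib, ← Finset.sum_mul] at h
  rw [← Complex.ofReal_sum, ← Complex.ofReal_sum] at h
  constructor
  · have hre := congrArg Complex.re h
    simp only [Complex.add_re, Complex.ofReal_re, Complex.mul_re, Complex.ofReal_im,
      Complex.I_re, Complex.I_im, mul_zero, zero_mul, sub_zero, zero_sub, mul_one,
      neg_zero, add_zero, apply_ite Complex.re, Complex.natCast_re, Complex.zero_re] at hre
    exact hre
  · have him := congrArg Complex.im h
    simp only [Complex.add_im, Complex.ofReal_im, Complex.mul_im, Complex.ofReal_re,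
      Complex.I_re, Complex.I_im, mul_zero, zero_mul, mul_one, add_zero, zero_add,
      apply_ite Complex.im, Complex.natCast_im, Complex.zero_im, ite_self] at him
    exact him

lemma dvd_small {n : ℕ} (hn : 0 < n) (d : ℤ) (h : (n:ℤ) ∣ d) (h1 : -(n:ℤ) < d) (h2 : d < n) :
    d = 0 := by
  obtain ⟨t, rfl⟩ := h
  have hn' : (0:ℤ) < n := by exact_mod_cast hn
  rcases lt_trichotomy t 0 with ht | ht | ht
  · nlinarith
  · simp [ht]
  · nlinarith

lemma fold_sum {n : ℕ} (hn : 3 ≤ n) (m : Fin n) (g : ℝ) :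
    ∑ j : Fin (n/2+1), (if (m.val = j.val ∨ m.val = n - j.val) then g else 0) = g := by
  have hm := m.isLt
  set j0 : Fin (n/2+1) := ⟨min m.val (n - m.val), by omega⟩ with hj0
  rw [Finset.sum_eq_single_of_mem j0 (Finset.mem_univ _)]
  · rw [if_pos]
    simp only [hj0]
    omega
  · intro j _ hne
    rw [if_neg]
    intro hc
    apply hne
    apply Fin.ext
    have hj := j.isLt
    simp only [hj0]
    omega

lemma triple_swap {α β : Type*} [Fintype α] [Fintype β] (F : α → β → β → ℝ) :
    ∑ i : β, ∑ k : β, ∑ j : α, F j i k = ∑ j : α, ∑ i : β, ∑ k : β, F j i k := by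
  calc ∑ i : β, ∑ k : β, ∑ j : α, F j i k
      = ∑ i : β, ∑ j : α, ∑ k : β, F j i k :=
        Finset.sum_congr rfl fun i _ => Finset.sum_comm
    _ = ∑ j : α, ∑ i : β, ∑ k : β, F j i k := Finset.sum_comm


lemma square_expand {β : Type*} [Fintype β] (a b : β → ℝ) (t : ℝ) :
    ∑ i : β, ∑ k : β, t * (a i * a k + b i * b k) = t * ((∑ i, a i)^2 + (∑ i, b i)^2) := by
  have h1 : (∑ i, a i)^2 = ∑ i, ∑ k, a i * a k := by
    rw [sq, Finset.sum_mul_sum]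
  have h2 : (∑ i, b i)^2 = ∑ i, ∑ k, b i * b k := by
    rw [sq, Finset.sum_mul_sum]
  rw [h1, h2, ← Finset.sum_add_distrib, Finset.mul_sum]
  refine Finset.sum_congr rfl fun i _ => ?_
  rw [← Finset.sum_add_distrib, Finset.mul_sum]

lemma cos_mul_cos (X Y : ℝ) :
    Real.cos X * Real.cos Y = (Real.cos (X - Y) + Real.cos (X + Y)) / 2 := by
  rw [Real.cos_sub, Real.cos_add]; ring

lemma cos_diff_edge {n : ℕ} (hn : 3 ≤ n) (j a b : ℕ) (ha : a < n) (hb : b < n)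
    (hab : b = (a+1) % n ∨ a = (b+1) % n) :
    Real.cos (2*Real.pi*j*a/n - 2*Real.pi*j*b/n) = Real.cos (2*(j:ℝ)*Real.pi/n) := by
  have hnR : (n:ℝ) ≠ 0 := Nat.cast_ne_zero.mpr (by omega)
  rcases hab with h | h
  · rcases Nat.lt_or_ge (a+1) n with h2 | h2
    · have hb' : b = a + 1 := by rw [h, Nat.mod_eq_of_lt h2]
      have harg : (2*Real.pi*(j:ℝ)*a/n - 2*Real.pi*j*b/n) = -(2*(j:ℝ)*Real.pi/n) := by
        subst hb'; push_cast; field_simp; ring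
      rw [harg, Real.cos_neg]
    · have han : a + 1 = n := by omega
      have hb' : b = 0 := by rw [h, han, Nat.mod_self]
      have haR : (a:ℝ) = (n:ℝ) - 1 := by
        have := congrArg (Nat.cast : ℕ → ℝ) han; push_cast at this; linarith
      have harg : (2*Real.pi*(j:ℝ)*a/n - 2*Real.pi*j*b/n)
          = (j:ℝ)*(2*Real.pi) - 2*(j:ℝ)*Real.pi/n := by
        subst hb'; rw [haR]; push_cast; field_simp; ring
      rw [harg, Real.cos_nat_mul_two_pi_sub]
  · rcases Nat.lt_or_ge (b+1) n with h2 | h2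
    · have ha' : a = b + 1 := by rw [h, Nat.mod_eq_of_lt h2]
      have harg : (2*Real.pi*(j:ℝ)*a/n - 2*Real.pi*j*b/n) = (2*(j:ℝ)*Real.pi/n) := by
        subst ha'; push_cast; field_simp; ring
      rw [harg]
    · have hbn : b + 1 = n := by omega
      have ha' : a = 0 := by rw [h, hbn, Nat.mod_self]
      have hbR : (b:ℝ) = (n:ℝ) - 1 := by
        have := congrArg (Nat.cast : ℕ → ℝ) hbn; push_cast at this; linarith
      have harg : (2*Real.pi*(j:ℝ)*a/n - 2*Real.pi*j*b/n)
          = -((j:ℝ)*(2*Real.pi) - 2*(j:ℝ)*Real.pi/n) := by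
        subst ha'; rw [hbR]; push_cast; field_simp; ring
      rw [harg, Real.cos_neg, Real.cos_nat_mul_two_pi_sub]


lemma succ_val {n : ℕ} [NeZero n] (hn : 3 ≤ n) (k : Fin n) :
    (k + 1 : Fin n).val = (k.val + 1) % n := by
  rw [Fin.val_add, Fin.val_one', Nat.mod_eq_of_lt (by omega : 1 < n)]


lemma lp_to_sdp {n : ℕ} [NeZero n] (hn : 3 ≤ n) (x : Fin (n/2+1) → ℝ)
    (hx0 : ∀ j, 0 ≤ x j) (hx1 : (∑ j, x j) = 1)
    (hx2 : (∑ j, x j * Real.cos (2 * (j:ℕ) * Real.pi / n)) = 0) :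
    ∃ B : Matrix (Fin n) (Fin n) ℝ, B.IsSymm ∧ B.PosSemidef ∧ (∑ i, B i i) = 1 ∧
      (∀ i k : Fin n, i ≠ k → ((k = i + 1) ∨ (i = k + 1)) → B i k = 0) ∧
      (n:ℝ) * x 0 = ∑ i, ∑ k, B i k := by
  have hn0 : 0 < n := by omega
  have hnR : (n:ℝ) ≠ 0 := Nat.cast_ne_zero.mpr hn0.ne'
  set c : Fin (n/2+1) → Fin n → ℝ :=
    fun j i => Real.cos (2 * Real.pi * j.val * i.val / n) with hc
  set s : Fin (n/2+1) → Fin n → ℝ :=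
    fun j i => Real.sin (2 * Real.pi * j.val * i.val / n) with hs
  set B : Matrix (Fin n) (Fin n) ℝ :=
    Matrix.of (fun i k => (1/(n:ℝ)) * ∑ j, x j * (c j i * c j k + s j i * s j k)) with hB
  -- symmetry
  have hsymm : B.IsSymm := by
    apply Matrix.ext
    intro i k
    simp only [hB, Matrix.transpose_apply, Matrix.of_apply]
    congr 1
    exact Finset.sum_congr rfl fun j _ => by ring
  -- sums of cos/sin over a full period
  have hcsum : ∀ j : Fin (n/2+1), (∑ i, c j i) = if j.val = 0 then (n:ℝ) else 0 := by
    intro j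
    have h := (cos_sum n hn0 (j.val : ℤ)).1
    have hconv : (∑ i, c j i) = ∑ m ∈ Finset.range n, Real.cos (2 * Real.pi * (j.val:ℤ) * m / n) := by
      rw [← Fin.sum_univ_eq_sum_range (fun m => Real.cos (2 * Real.pi * (j.val:ℤ) * m / n)) n]
      refine Finset.sum_congr rfl fun i _ => ?_
      simp only [hc]
      congr 1
      all_goals push_cast
      all_goals ring
    rw [hconv, h]
    have hj2 : j.val ≤ n/2 := by omega
    by_cases hj : j.val = 0
    · simp [hj]
    · rw [if_neg, if_neg hj]
      intro hdvd
      have : (j.val : ℤ) = 0 ∨ (n:ℤ) ≤ (j.val:ℤ) := by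
        rcases hdvd with ⟨t, ht⟩
        rcases lt_trichotomy t 0 with h' | h' | h'
        · exfalso; have : (0:ℤ) ≤ (j.val:ℤ) := by positivity
          have hn' : (0:ℤ) < n := by exact_mod_cast hn0
          nlinarith
        · left; simp [ht, h']
        · right; have hn' : (0:ℤ) < n := by exact_mod_cast hn0
          nlinarith
      rcases this with h' | h'
      · exact hj (by exact_mod_cast h')
      · have : (j.val:ℤ) < n := by exact_mod_cast (by omega : j.val < n)
        omega
  have hssum : ∀ j : Fin (n/2+1), (∑ i, s j i) = 0 := by
    intro j
    have h := (cos_sum n hn0 (j.val : ℤ)).2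
    have hconv : (∑ i, s j i) = ∑ m ∈ Finset.range n, Real.sin (2 * Real.pi * (j.val:ℤ) * m / n) := by
      rw [← Fin.sum_univ_eq_sum_range (fun m => Real.sin (2 * Real.pi * (j.val:ℤ) * m / n)) n]
      refine Finset.sum_congr rfl fun i _ => ?_
      simp only [hs]
      congr 1
      all_goals push_cast
      all_goals ring
    rw [hconv, h]
  -- positive semidefinite
  have hpsd : B.PosSemidef := by
    rw [Matrix.posSemidef_iff_dotProduct_mulVec]
    constructor
    · rw [Matrix.IsHermitian, Matrix.conjTranspose_eq_transpose_of_trivial]; exact hsymm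
    · intro v
      have hstar : star v = v := funext fun i => star_trivial _
      rw [hstar]
      have hdot : dotProduct v (B *ᵥ v) = ∑ i, ∑ k, v i * (B i k * v k) := by
        simp only [dotProduct, Matrix.mulVec, Finset.mul_sum]
      rw [hdot]
      have hterm : ∀ i k : Fin n, v i * (B i k * v k)
          = ∑ j, (1/(n:ℝ)) * x j * ((v i * c j i) * (v k * c j k) + (v i * s j i) * (v k * s j k)) := by
        intro i k
        simp only [hB, Matrix.of_apply]
        rw [show v i * ((1/(n:ℝ)) * (∑ j, x j * (c j i * c j k + s j i * s j k)) * v k)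
            = (v i * (1/(n:ℝ)) * v k) * (∑ j, x j * (c j i * c j k + s j i * s j k)) by ring,
          Finset.mul_sum]
        exact Finset.sum_congr rfl fun j _ => by ring
      calc (0:ℝ) ≤ ∑ j : Fin (n/2+1), (1/(n:ℝ)) * x j *
              ((∑ i, v i * c j i)^2 + (∑ i, v i * s j i)^2) := by
            refine Finset.sum_nonneg fun j _ => ?_
            have h1 : (0:ℝ) ≤ (1/(n:ℝ)) * x j := by
              apply mul_nonneg (by positivity) (hx0 j)
            positivity
        _ = ∑ j, ∑ i, ∑ k, (1/(n:ℝ)) * x j *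
              ((v i * c j i) * (v k * c j k) + (v i * s j i) * (v k * s j k)) := by
            refine Finset.sum_congr rfl fun j _ => ?_
            rw [square_expand (fun i => v i * c j i) (fun i => v i * s j i) ((1/(n:ℝ)) * x j)]
        _ = ∑ i, ∑ k, ∑ j, (1/(n:ℝ)) * x j *
              ((v i * c j i) * (v k * c j k) + (v i * s j i) * (v k * s j k)) :=
            (triple_swap _).symm
        _ = ∑ i, ∑ k, v i * (B i k * v k) := by
            refine Finset.sum_congr rfl fun i _ => Finset.sum_congr rfl fun k _ => ?_
            rw [hterm i k]
  -- trace
  have htrace : (∑ i, B i i) = 1 := by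
    have hdiag : ∀ i : Fin n, B i i = 1/(n:ℝ) := by
      intro i
      simp only [hB, Matrix.of_apply]
      have : ∀ j : Fin (n/2+1), x j * (c j i * c j i + s j i * s j i) = x j := by
        intro j
        have h1 : c j i * c j i + s j i * s j i = 1 := by
          have := Real.sin_sq_add_cos_sq (2 * Real.pi * j.val * i.val / n)
          simp only [hc, hs]
          nlinarith [this]
        rw [h1, mul_one]
      rw [Finset.sum_congr rfl fun j _ => this j, hx1, mul_one]
    rw [Finset.sum_congr rfl fun i _ => hdiag i, Finset.sum_const, Finset.card_univ,
      Fintype.card_fin]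
    rw [nsmul_eq_mul]
    field_simp
  -- edges
  have hedge : ∀ i k : Fin n, i ≠ k → ((k = i + 1) ∨ (i = k + 1)) → B i k = 0 := by
    intro i k hik hadj
    have hval : k.val = (i.val + 1) % n ∨ i.val = (k.val + 1) % n := by
      rcases hadj with h | h
      · left; rw [h, Fin.val_add, Fin.val_one', Nat.mod_eq_of_lt (by omega : 1 < n)]
      · right; rw [h, Fin.val_add, Fin.val_one', Nat.mod_eq_of_lt (by omega : 1 < n)]
    have hterm : ∀ j : Fin (n/2+1), c j i * c j k + s j i * s j k
        = Real.cos (2 * (j.val:ℝ) * Real.pi / n) := by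
      intro j
      have h1 : c j i * c j k + s j i * s j k
          = Real.cos (2 * Real.pi * j.val * i.val / n - 2 * Real.pi * j.val * k.val / n) := by
        rw [Real.cos_sub]; try simp only [hc, hs]; try ring
      rw [h1, cos_diff_edge hn j.val i.val k.val i.isLt k.isLt hval]
    simp only [hB, Matrix.of_apply]
    rw [Finset.sum_congr rfl fun j _ => by rw [hterm j]]
    have : (∑ j : Fin (n/2+1), x j * Real.cos (2 * (j.val:ℝ) * Real.pi / n)) = 0 := hx2
    rw [this, mul_zero]
  -- total sum
  have hsum : (n:ℝ) * x 0 = ∑ i, ∑ k, B i k := by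
    have hexp : ∑ i, ∑ k, B i k = ∑ j : Fin (n/2+1), (1/(n:ℝ)) * x j *
        ((∑ i, c j i)^2 + (∑ i, s j i)^2) := by
      calc ∑ i, ∑ k, B i k
          = ∑ i, ∑ k, ∑ j, (1/(n:ℝ)) * x j * (c j i * c j k + s j i * s j k) := by
            refine Finset.sum_congr rfl fun i _ => Finset.sum_congr rfl fun k _ => ?_
            simp only [hB, Matrix.of_apply]
            rw [Finset.mul_sum]
            exact Finset.sum_congr rfl fun j _ => by ring
        _ = ∑ j, ∑ i, ∑ k, (1/(n:ℝ)) * x j * (c j i * c j k + s j i * s j k) :=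
            triple_swap _
        _ = ∑ j : Fin (n/2+1), (1/(n:ℝ)) * x j * ((∑ i, c j i)^2 + (∑ i, s j i)^2) := by
            refine Finset.sum_congr rfl fun j _ => ?_
            rw [square_expand (c j) (s j) ((1/(n:ℝ)) * x j)]
    rw [hexp]
    rw [Finset.sum_eq_single (0 : Fin (n/2+1))]
    · rw [hcsum 0, hssum 0]
      simp only [Fin.val_zero, if_pos]
      field_simp
      ring
    · intro j _ hj
      have hjv : j.val ≠ 0 := fun h => hj (Fin.ext h)
      rw [hcsum j, hssum j, if_neg hjv]
      ring
    · intro h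
      exact absurd (Finset.mem_univ _) h
  exact ⟨B, hsymm, hpsd, htrace, hedge, hsum⟩


lemma sdp_to_lp {n : ℕ} [NeZero n] (hn : 3 ≤ n) (B : Matrix (Fin n) (Fin n) ℝ)
    (hpsd : B.PosSemidef) (htr : (∑ i, B i i) = 1)
    (hedge : ∀ i k : Fin n, i ≠ k → ((k = i + 1) ∨ (i = k + 1)) → B i k = 0) :
    ∃ x : Fin (n/2+1) → ℝ, (∀ j, 0 ≤ x j) ∧ (∑ j, x j) = 1 ∧
      (∑ j, x j * Real.cos (2 * (j:ℕ) * Real.pi / n)) = 0 ∧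
      (∑ i, ∑ k, B i k) = (n:ℝ) * x 0 := by
  have hn0 : 0 < n := by omega
  have hnR : (n:ℝ) ≠ 0 := Nat.cast_ne_zero.mpr hn0.ne'
  set lam : Fin n → ℝ := fun m => (1/(n:ℝ)) * ∑ i, ∑ k, B i k *
      Real.cos (2*Real.pi*m.val*i.val/n - 2*Real.pi*m.val*k.val/n) with hlam
  -- nonnegativity of lam
  have hlam_nn : ∀ m, 0 ≤ lam m := by
    intro m
    set cv : Fin n → ℝ := fun i => Real.cos (2*Real.pi*m.val*i.val/n) with hcv
    set sv : Fin n → ℝ := fun i => Real.sin (2*Real.pi*m.val*i.val/n) with hsv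
    have h1 := hpsd.dotProduct_mulVec_nonneg cv
    have h2 := hpsd.dotProduct_mulVec_nonneg sv
    rw [show star cv = cv from funext fun i => star_trivial _] at h1
    rw [show star sv = sv from funext fun i => star_trivial _] at h2
    have hdot : ∀ v : Fin n → ℝ, dotProduct v (B *ᵥ v) = ∑ i, ∑ k, v i * (B i k * v k) := by
      intro v; simp only [dotProduct, Matrix.mulVec, Finset.mul_sum]
    rw [hdot] at h1 h2
    have key : lam m = (1/(n:ℝ)) * ((∑ i, ∑ k, cv i * (B i k * cv k))
        + (∑ i, ∑ k, sv i * (B i k * sv k))) := by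
      simp only [hlam]
      congr 1
      rw [← Finset.sum_add_distrib]
      refine Finset.sum_congr rfl fun i _ => ?_
      rw [← Finset.sum_add_distrib]
      refine Finset.sum_congr rfl fun k _ => ?_
      rw [Real.cos_sub]
      try simp only [hcv, hsv]
      try ring
    rw [key]
    have hnn := add_nonneg h1 h2
    apply mul_nonneg (by positivity) hnn
  -- full-period sums
  have hfull : ∀ (a b : Fin n) (e : ℤ),
      (∑ m : Fin n, Real.cos (2*Real.pi*m.val*a.val/n - 2*Real.pi*m.val*b.val/n
        + 2*Real.pi*m.val*e/n))
      = if ((n:ℤ) ∣ ((a.val:ℤ) - b.val + e)) then (n:ℝ) else 0 := by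
    intro a b e
    rw [Fin.sum_univ_eq_sum_range
        (fun t : ℕ => Real.cos (2*Real.pi*t*a.val/n - 2*Real.pi*t*b.val/n + 2*Real.pi*t*e/n)) n,
      ← (cos_sum n hn0 ((a.val:ℤ) - b.val + e)).1]
    refine Finset.sum_congr rfl fun m _ => ?_
    congr 1
    push_cast
    ring
  have hfull0 : ∀ (a b : Fin n),
      (∑ m : Fin n, Real.cos (2*Real.pi*m.val*a.val/n - 2*Real.pi*m.val*b.val/n))
      = if ((n:ℤ) ∣ ((a.val:ℤ) - b.val)) then (n:ℝ) else 0 := by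
    intro a b
    have h := hfull a b 0
    simp only [Int.cast_zero, add_zero] at h
    rw [← h]
    refine Finset.sum_congr rfl fun m _ => ?_
    congr 1
    push_cast
    ring
  -- claim A : sum of lam = 1
  have hA : ∑ m : Fin n, lam m = 1 := by
    calc ∑ m : Fin n, lam m
        = (1/(n:ℝ)) * ∑ m : Fin n, ∑ i, ∑ k, B i k *
            Real.cos (2*Real.pi*m.val*i.val/n - 2*Real.pi*m.val*k.val/n) := by
          rw [Finset.mul_sum]
      _ = (1/(n:ℝ)) * ∑ i, ∑ k, ∑ m : Fin n, B i k *
            Real.cos (2*Real.pi*m.val*i.val/n - 2*Real.pi*m.val*k.val/n) := by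
          congr 1
          exact (triple_swap _).symm
      _ = (1/(n:ℝ)) * ∑ i, ∑ k, B i k *
            (if ((n:ℤ) ∣ ((i.val:ℤ) - k.val)) then (n:ℝ) else 0) := by
          congr 1
          refine Finset.sum_congr rfl fun i _ => Finset.sum_congr rfl fun k _ => ?_
          rw [← Finset.mul_sum, hfull0 i k]
      _ = (1/(n:ℝ)) * ∑ i, B i i * n := by
          congr 1
          refine Finset.sum_congr rfl fun i _ => ?_
          rw [Finset.sum_eq_single i]
          · rw [if_pos (by simp)]
          · intro k _ hk
            rw [if_neg, mul_zero]
            intro hdvd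
            have hik : ((i.val:ℤ) - k.val) = 0 := by
              refine dvd_small hn0 _ hdvd ?_ ?_
              · have := i.isLt; have := k.isLt; omega
              · have := i.isLt; have := k.isLt; omega
            exact hk (Fin.ext (by omega)).symm
          · intro h; exact absurd (Finset.mem_univ _) h
      _ = 1 := by
          rw [← Finset.sum_mul, htr, one_mul]
          field_simp
  -- claim B : weighted sum vanishes
  have hB2 : ∑ m : Fin n, lam m * Real.cos (2*Real.pi*m.val/n) = 0 := by
    calc ∑ m : Fin n, lam m * Real.cos (2*Real.pi*m.val/n)
        = (1/(n:ℝ)) * ∑ m : Fin n, ∑ i, ∑ k, B i k *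
            (Real.cos (2*Real.pi*m.val*i.val/n - 2*Real.pi*m.val*k.val/n)
              * Real.cos (2*Real.pi*m.val/n)) := by
          rw [Finset.mul_sum]
          refine Finset.sum_congr rfl fun m _ => ?_
          simp only [hlam]
          rw [show (1/(n:ℝ)) * (∑ i, ∑ k, B i k *
              Real.cos (2*Real.pi*m.val*i.val/n - 2*Real.pi*m.val*k.val/n))
                * Real.cos (2*Real.pi*m.val/n)
              = (1/(n:ℝ)) * ((∑ i, ∑ k, B i k *
              Real.cos (2*Real.pi*m.val*i.val/n - 2*Real.pi*m.val*k.val/n))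
                * Real.cos (2*Real.pi*m.val/n)) from by ring]
          congr 1
          rw [Finset.sum_mul]
          refine Finset.sum_congr rfl fun i _ => ?_
          rw [Finset.sum_mul]
          refine Finset.sum_congr rfl fun k _ => ?_
          ring
      _ = (1/(n:ℝ)) * ∑ i, ∑ k, ∑ m : Fin n, B i k *
            (Real.cos (2*Real.pi*m.val*i.val/n - 2*Real.pi*m.val*k.val/n)
              * Real.cos (2*Real.pi*m.val/n)) := by
          congr 1
          exact (triple_swap _).symm
      _ = (1/(n:ℝ)) * ∑ i, ∑ k, B i k *
            (((if ((n:ℤ) ∣ ((i.val:ℤ) - k.val + (-1))) then (n:ℝ) else 0)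
              + (if ((n:ℤ) ∣ ((i.val:ℤ) - k.val + 1)) then (n:ℝ) else 0)) / 2) := by
          congr 1
          refine Finset.sum_congr rfl fun i _ => Finset.sum_congr rfl fun k _ => ?_
          rw [← Finset.mul_sum]
          congr 1
          have hsplit : ∀ m : Fin n,
              Real.cos (2*Real.pi*m.val*i.val/n - 2*Real.pi*m.val*k.val/n)
                * Real.cos (2*Real.pi*m.val/n)
              = (Real.cos (2*Real.pi*m.val*i.val/n - 2*Real.pi*m.val*k.val/n
                    + 2*Real.pi*m.val*((-1:ℤ):ℝ)/n)
                + Real.cos (2*Real.pi*m.val*i.val/n - 2*Real.pi*m.val*k.val/n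
                    + 2*Real.pi*m.val*((1:ℤ):ℝ)/n)) / 2 := by
            intro m
            rw [cos_mul_cos]
            have e1 : (2*Real.pi*(m.val:ℝ)*i.val/n - 2*Real.pi*m.val*k.val/n
                - 2*Real.pi*m.val/n)
                = (2*Real.pi*m.val*i.val/n - 2*Real.pi*m.val*k.val/n
                    + 2*Real.pi*m.val*((-1:ℤ):ℝ)/n) := by push_cast; ring
            have e2 : (2*Real.pi*(m.val:ℝ)*i.val/n - 2*Real.pi*m.val*k.val/n
                + 2*Real.pi*m.val/n)
                = (2*Real.pi*m.val*i.val/n - 2*Real.pi*m.val*k.val/n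
                    + 2*Real.pi*m.val*((1:ℤ):ℝ)/n) := by push_cast; ring
            rw [e1, e2]
          rw [Finset.sum_congr rfl fun m _ => hsplit m, ← Finset.sum_div,
            Finset.sum_add_distrib, hfull i k (-1), hfull i k 1]
      _ = 0 := by
          rw [mul_eq_zero]
          right
          refine Finset.sum_eq_zero fun i _ => Finset.sum_eq_zero fun k _ => ?_
          have hi := i.isLt; have hk := k.isLt
          by_cases hd1 : (n:ℤ) ∣ ((i.val:ℤ) - k.val + (-1))
          · -- then k = i + 1
            have : ((i.val:ℤ) - k.val + (-1) = 0) ∨ ((i.val:ℤ) - k.val + (-1) = -n) := by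
              rcases hd1 with ⟨t, ht⟩
              have hni : (0:ℤ) < n := by exact_mod_cast hn0
              rcases lt_trichotomy t 0 with h' | h' | h'
              · right
                have ht1 : t = -1 := by nlinarith
                rw [ht, ht1]; ring
              · left; rw [ht, h', mul_zero]
              · exfalso; nlinarith
            have hikne : i ≠ k := by
              intro hik; subst hik
              rcases this with h' | h' <;> omega
            have hi1 : i = k + 1 := by
              apply Fin.ext
              rw [succ_val hn]
              rcases this with h' | h'
              · rw [Nat.mod_eq_of_lt (by omega : k.val + 1 < n)]; omega
              · rw [show k.val + 1 = n by omega, Nat.mod_self]; omega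
            rw [hedge i k hikne (Or.inr hi1), zero_mul]
          · by_cases hd2 : (n:ℤ) ∣ ((i.val:ℤ) - k.val + 1)
            · -- then i = k + 1
              have : ((i.val:ℤ) - k.val + 1 = 0) ∨ ((i.val:ℤ) - k.val + 1 = n) := by
                rcases hd2 with ⟨t, ht⟩
                have hni : (0:ℤ) < n := by exact_mod_cast hn0
                rcases lt_trichotomy t 0 with h' | h' | h'
                · exfalso; nlinarith
                · left; rw [ht, h', mul_zero]
                · right
                  have ht1 : t = 1 := by nlinarith
                  rw [ht, ht1]; ring
              have hikne : i ≠ k := by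
                intro hik; subst hik
                rcases this with h' | h' <;> omega
              have hk1 : k = i + 1 := by
                apply Fin.ext
                rw [succ_val hn]
                rcases this with h' | h'
                · rw [Nat.mod_eq_of_lt (by omega : i.val + 1 < n)]; omega
                · rw [show i.val + 1 = n by omega, Nat.mod_self]; omega
              rw [hedge i k hikne (Or.inl hk1), zero_mul]
            · rw [if_neg hd1, if_neg hd2]
              norm_num
  -- claim C : lam at 0
  set m0 : Fin n := ⟨0, hn0⟩ with hm0
  have hC : lam m0 = (1/(n:ℝ)) * ∑ i, ∑ k, B i k := by
    simp only [hlam]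
    congr 1
    refine Finset.sum_congr rfl fun i _ => Finset.sum_congr rfl fun k _ => ?_
    have : (2*Real.pi*(m0.val:ℝ)*i.val/n - 2*Real.pi*m0.val*k.val/n) = 0 := by
      simp [hm0]
    rw [this, Real.cos_zero, mul_one]
  -- the LP point
  set x : Fin (n/2+1) → ℝ :=
    fun j => ∑ m : Fin n, (if (m.val = j.val ∨ m.val = n - j.val) then lam m else 0) with hx
  have hx0' : x 0 = lam m0 := by
    simp only [hx]
    rw [Finset.sum_eq_single m0]
    · rw [if_pos]
      left
      simp [hm0]
    · intro m _ hm
      rw [if_neg]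
      push_neg
      constructor
      · intro h0
        exact hm (Fin.ext (by simpa [hm0] using h0))
      · have := m.isLt
        simp only [Fin.val_zero]
        omega
    · intro h; exact absurd (Finset.mem_univ _) h
  refine ⟨x, ?_, ?_, ?_, ?_⟩
  · intro j
    refine Finset.sum_nonneg fun m _ => ?_
    split
    · exact hlam_nn m
    · exact le_rfl
  · calc ∑ j, x j
        = ∑ m : Fin n, ∑ j : Fin (n/2+1),
            (if (m.val = j.val ∨ m.val = n - j.val) then lam m else 0) := Finset.sum_comm
      _ = ∑ m : Fin n, lam m := Finset.sum_congr rfl fun m _ => fold_sum hn m (lam m)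
      _ = 1 := hA
  · calc ∑ j, x j * Real.cos (2 * (j:ℕ) * Real.pi / n)
        = ∑ j : Fin (n/2+1), ∑ m : Fin n,
            (if (m.val = j.val ∨ m.val = n - j.val)
              then lam m * Real.cos (2*Real.pi*m.val/n) else 0) := by
          refine Finset.sum_congr rfl fun j _ => ?_
          simp only [hx]
          rw [Finset.sum_mul]
          refine Finset.sum_congr rfl fun m _ => ?_
          rw [ite_mul, zero_mul]
          by_cases hcond : (m.val = j.val ∨ m.val = n - j.val)
          · rw [if_pos hcond, if_pos hcond]
            congr 1
            have hj2 : j.val ≤ n/2 := by omega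
            have hm := m.isLt
            rcases hcond with h' | h'
            · rw [h']
              congr 1
              push_cast
              ring
            · have hjn : (m.val:ℝ) = (n:ℝ) - j.val := by
                have : j.val ≤ n := by omega
                rw [h']
                push_cast [Nat.cast_sub this]
                ring
              rw [show (2*Real.pi*(m.val:ℝ)/n) = 2*Real.pi - 2*(j.val:ℝ)*Real.pi/n from by
                rw [hjn]; field_simp]
              rw [Real.cos_two_pi_sub]
          · rw [if_neg hcond, if_neg hcond]
      _ = ∑ m : Fin n, ∑ j : Fin (n/2+1),
            (if (m.val = j.val ∨ m.val = n - j.val)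
              then lam m * Real.cos (2*Real.pi*m.val/n) else 0) := Finset.sum_comm
      _ = ∑ m : Fin n, lam m * Real.cos (2*Real.pi*m.val/n) :=
          Finset.sum_congr rfl fun m _ => fold_sum hn m _
      _ = 0 := hB2
  · rw [hx0', hC]
    field_simp

end LovaszCycleAux

open LovaszCycleAux in
/-- **Linear programming formulation of the Lovász theta number of the cycle `C_n`.**
For the cycle graph on `n ≥ 3` vertices, symmetry reduction by the cyclic group turns
the semidefinite program defining `ϑ(C_n)` into an equivalent linear program:
`ϑ(C_n) = sup { n·x_0 : x_j ≥ 0, Σ_j x_j = 1, Σ_j x_j cos(2jπ/n) = 0 }`,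
where `j` ranges over `0, …, ⌊n/2⌋`. -/
theorem lovasz_theta_cycle_lp {n : ℕ} [NeZero n] (hn : 3 ≤ n)
    (Γ : SimpleGraph (Fin n))
    (hΓ : Γ = SimpleGraph.fromRel (fun i j : Fin n => j = i + 1))
    (theta : ℝ)
    (htheta : theta = sSup {y : ℝ | ∃ B : Matrix (Fin n) (Fin n) ℝ,
      B.IsSymm ∧ B.PosSemidef ∧ (∑ i, B i i) = 1 ∧
      (∀ i j, Γ.Adj i j → B i j = 0) ∧ y = ∑ i, ∑ j, B i j}) :
    theta = sSup {y : ℝ | ∃ x : Fin (n / 2 + 1) → ℝ,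
      (∀ j, 0 ≤ x j) ∧ (∑ j, x j) = 1 ∧
      (∑ j, x j * Real.cos (2 * (j : ℕ) * π / n)) = 0 ∧
      y = n * x 0} := by
  subst hΓ
  rw [htheta]
  congr 1
  ext y
  simp only [Set.mem_setOf_eq]
  constructor
  · rintro ⟨B, _hsym, hpsd, htr, hedge, hy⟩
    have hedge' : ∀ i k : Fin n, i ≠ k → ((k = i + 1) ∨ (i = k + 1)) → B i k = 0 := by
      intro i k h1 h2
      exact hedge i k ((SimpleGraph.fromRel_adj _ i k).2 ⟨h1, h2⟩)
    obtain ⟨x, h0, h1, h2, h3⟩ := sdp_to_lp hn B hpsd htr hedge'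
    exact ⟨x, h0, h1, h2, by rw [hy, h3]⟩
  · rintro ⟨x, h0, h1, h2, hy⟩
    obtain ⟨B, hsym, hpsd, htr, hedge, hsum⟩ := lp_to_sdp hn x h0 h1 h2
    refine ⟨B, hsym, hpsd, htr, ?_, by rw [hy, hsum]⟩
    intro i k hadj
    rw [SimpleGraph.fromRel_adj] at hadj
    exact hedge i k hadj.1 hadj.2
end

section
/- Noether's bound: let K be a field of characteristic zero and let a finite group G act linearly on K^n. Then the invariant ring K[X_1, …, X_n]^G is generated as a K-algebra by at most binom(n + |G|, n) homogeneous invariant polynomials, each of degree not exceeding |G|. -/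
open MvPolynomial

/-- The action of an invertible matrix `M` on polynomials by linear change of variables:
`X_i ↦ Σ_j M i j • X_j`.  For a representation `ρ : G →* GLₙ(K)`, the polynomial
`f^g := polyAct (ρ g⁻¹) f` satisfies `(f^g)(x) = f(ρ(g⁻¹) x)`. -/
noncomputable def polyAct {K : Type*} [CommSemiring K] {n : ℕ}
    (M : Matrix (Fin n) (Fin n) K) :
    MvPolynomial (Fin n) K →ₐ[K] MvPolynomial (Fin n) K :=
  MvPolynomial.aeval (fun i => ∑ j, M i j • MvPolynomial.X j)

set_option linter.unusedSectionVars false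

namespace NoetherProof

open Finset

/-! ### Generalities on `polyAct` -/

section PolyAct

variable {K : Type*} [CommSemiring K] {n : ℕ}

lemma polyAct_X (M : Matrix (Fin n) (Fin n) K) (i : Fin n) :
    polyAct M (X i) = ∑ j, M i j • X j :=
  aeval_X _ i

lemma polyAct_polyAct (M N : Matrix (Fin n) (Fin n) K) (p : MvPolynomial (Fin n) K) :
    polyAct M (polyAct N p) = polyAct (N * M) p := by
  have : (polyAct M).comp (polyAct N) = polyAct (N * M) := by
    apply MvPolynomial.algHom_ext
    intro i
    simp only [AlgHom.comp_apply, polyAct_X, map_sum, map_smul, Matrix.mul_apply,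
      Finset.sum_smul, Finset.smul_sum, smul_smul]
    rw [Finset.sum_comm]
  calc polyAct M (polyAct N p) = (polyAct M).comp (polyAct N) p := rfl
    _ = polyAct (N * M) p := by rw [this]

lemma polyAct_isHomogeneous (M : Matrix (Fin n) (Fin n) K) {p : MvPolynomial (Fin n) K}
    {d : ℕ} (hp : p.IsHomogeneous d) : (polyAct M p).IsHomogeneous d := by
  have h1 : ∀ i : Fin n, (∑ j, M i j • X j : MvPolynomial (Fin n) K).IsHomogeneous 1 := ?_
  · simpa [polyAct] using MvPolynomial.IsHomogeneous.aeval (S := K) hp (fun i => ∑ j, M i j • X j) h1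
  · intro i
    apply MvPolynomial.IsHomogeneous.sum
    intro j _
    rw [smul_eq_C_mul]
    simpa using (isHomogeneous_C _ (M i j)).mul (isHomogeneous_X _ j)

end PolyAct

/-! ### A polarization identity -/

lemma neg_one_powerset_sum {B : Type*} [CommRing B] {ι : Type*} [DecidableEq ι] (s : Finset ι) :
    ∑ T ∈ s.powerset, (-1 : B) ^ T.card = if s = ∅ then 1 else 0 := by
  have h := Finset.prod_add (fun _ : ι => (-1 : B)) (fun _ => 1) s
  simp only [neg_add_cancel, Finset.prod_const, one_pow, mul_one] at h
  rw [← h, zero_pow_eq]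
  simp [Finset.card_eq_zero]

lemma polarization {B : Type*} [CommRing B] (k : ℕ) (c : Fin k → B) :
    ∑ S ∈ (univ : Finset (Fin k)).powerset, (-1 : B) ^ (k - S.card) * (∑ t ∈ S, c t) ^ k
      = (k.factorial : B) * ∏ t, c t := by
  classical
  have expand : ∀ S : Finset (Fin k), (∑ t ∈ S, c t) ^ k
      = ∑ p ∈ Fintype.piFinset (fun _ : Fin k => S), ∏ i, c (p i) := by
    intro S
    have : (∑ t ∈ S, c t) ^ k = ∏ _i : Fin k, (∑ t ∈ S, c t) := by
      rw [Finset.prod_const, Finset.card_univ, Fintype.card_fin]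
    rw [this, Finset.prod_univ_sum]
  simp_rw [expand]
  have hfilt : ∀ S : Finset (Fin k), Fintype.piFinset (fun _ : Fin k => S)
      = (univ : Finset (Fin k → Fin k)).filter (fun p => ∀ i, p i ∈ S) := by
    intro S; ext p; simp [Fintype.mem_piFinset]
  simp_rw [hfilt, Finset.mul_sum, Finset.sum_filter]
  rw [Finset.sum_comm]
  have key : ∀ p : Fin k → Fin k,
      (∑ S ∈ (univ : Finset (Fin k)).powerset,
        (if ∀ i, p i ∈ S then (-1 : B) ^ (k - S.card) * ∏ i, c (p i) else 0))
      = if Function.Surjective p then ∏ i, c (p i) else 0 := by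
    intro p
    have hcond : ∀ S : Finset (Fin k), (∀ i, p i ∈ S) ↔ Finset.image p univ ⊆ S := by
      intro S; simp [Finset.image_subset_iff]
    calc ∑ S ∈ (univ : Finset (Fin k)).powerset,
          (if ∀ i, p i ∈ S then (-1 : B) ^ (k - S.card) * ∏ i, c (p i) else 0)
        = (∑ S ∈ (univ : Finset (Fin k)).powerset,
            if Finset.image p univ ⊆ S then (-1 : B) ^ (k - S.card) else 0) * ∏ i, c (p i) := by
          rw [Finset.sum_mul]
          refine Finset.sum_congr rfl fun S _ => ?_
          rw [ite_mul, zero_mul]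
          simp_rw [hcond]
      _ = (∑ T ∈ (Finset.image p univ)ᶜ.powerset, (-1 : B) ^ T.card) * ∏ i, c (p i) := by
          congr 1
          rw [← Finset.sum_filter]
          refine Finset.sum_nbij' (fun S => Sᶜ) (fun T => Tᶜ) ?_ ?_ ?_ ?_ ?_
          · intro S hS
            simp only [Finset.mem_filter, Finset.mem_powerset] at hS
            simpa [Finset.mem_powerset] using Finset.compl_subset_compl.mpr hS.2
          · intro T hT
            simp only [Finset.mem_powerset] at hT
            simp only [Finset.mem_filter, Finset.mem_powerset]
            exact ⟨Finset.subset_univ _, by simpa using Finset.compl_subset_compl.mpr hT⟩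
          · intro S _; simp
          · intro T _; simp
          · intro S _
            rw [Finset.card_compl, Fintype.card_fin]
      _ = if Function.Surjective p then ∏ i, c (p i) else 0 := by
          rw [neg_one_powerset_sum]
          have hiff : (Finset.image p univ)ᶜ = ∅ ↔ Function.Surjective p := by
            rw [Finset.compl_eq_empty_iff, ← Finset.coe_injective.eq_iff]
            simp [Set.range_eq_univ, Function.Surjective]
          by_cases hs : Function.Surjective p
          · rw [if_pos (hiff.mpr hs), if_pos hs, one_mul]
          · rw [if_neg (fun h => hs (hiff.mp h)), if_neg hs, zero_mul]
  rw [Finset.sum_congr rfl (fun p _ => key p), ← Finset.sum_filter]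
  have hperm : ∑ p ∈ (univ : Finset (Fin k → Fin k)).filter (fun p => Function.Surjective p),
      ∏ i, c (p i) = ∑ e : Equiv.Perm (Fin k), ∏ i, c (e i) := by
    refine (Finset.sum_bij (fun (e : Equiv.Perm (Fin k)) _ => (e : Fin k → Fin k))
      ?_ ?_ ?_ ?_).symm
    · intro e _
      simp only [Finset.mem_filter, Finset.mem_univ, true_and]
      exact e.surjective
    · intro e₁ _ e₂ _ h
      exact Equiv.coe_fn_injective h
    · intro p hp
      simp only [Finset.mem_filter, Finset.mem_univ, true_and] at hp
      exact ⟨Equiv.ofBijective p hp.bijective_of_finite, Finset.mem_univ _, rfl⟩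
    · intro e _; rfl
  rw [hperm]
  simp_rw [Equiv.prod_comp]
  rw [Finset.sum_const, Finset.card_univ, Fintype.card_perm, Fintype.card_fin, nsmul_eq_mul]

lemma polarization_sum {B : Type*} [CommRing B] {Γ : Type*} [Fintype Γ] (k : ℕ)
    (c : Γ → Fin k → B) :
    ∑ S ∈ (univ : Finset (Fin k)).powerset,
        (-1 : B) ^ (k - S.card) * (∑ γ, (∑ t ∈ S, c γ t) ^ k)
      = (k.factorial : B) * ∑ γ, ∏ t, c γ t := by
  simp_rw [Finset.mul_sum]
  rw [Finset.sum_comm]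
  exact Finset.sum_congr rfl fun γ _ => polarization k (c γ)

/-! ### Power sums generate all power sums up to degree `card σ` -/

section PowerSums

variable {K : Type*} [Field K] [CharZero K]

lemma esymm_mem (σ : Type*) [Fintype σ] (j : ℕ) :
    esymm σ K j ∈ Algebra.adjoin K
      {q : MvPolynomial σ K | ∃ i, 1 ≤ i ∧ i ≤ Fintype.card σ ∧ q = psum σ K i} := by
  classical
  induction j using Nat.strong_induction_on with
  | _ j ih =>
    rcases Nat.eq_zero_or_pos j with rfl | hj0
    · rw [esymm_zero]; exact one_mem _
    by_cases hjcard : j ≤ Fintype.card σ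
    swap
    · have : esymm σ K j = 0 := by
        rw [esymm, Finset.powersetCard_eq_empty.mpr (by simpa using hjcard), Finset.sum_empty]
      rw [this]; exact zero_mem _
    have hnewton := mul_esymm_eq_sum σ K j
    have hj : (j : K) ≠ 0 := Nat.cast_ne_zero.mpr (by omega)
    have heq : esymm σ K j = C ((j : K)⁻¹) *
        ((-1) ^ (j + 1) * ∑ a ∈ (Finset.HasAntidiagonal.antidiagonal j).filter (fun a => a.1 < j),
          (-1) ^ a.1 * esymm σ K a.1 * psum σ K a.2) := by
      rw [← hnewton, ← mul_assoc, show ((j : MvPolynomial σ K)) = C (j : K) by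
        simp, ← C_mul, inv_mul_cancel₀ hj, C_1, one_mul]
    rw [heq]
    refine mul_mem (Subalgebra.algebraMap_mem _ _) (mul_mem ?_ ?_)
    · exact pow_mem (neg_mem (one_mem _)) _
    refine sum_mem fun a ha => ?_
    simp only [Finset.mem_filter, Finset.HasAntidiagonal.mem_antidiagonal] at ha
    refine mul_mem (mul_mem (pow_mem (neg_mem (one_mem _)) _) (ih a.1 ha.2)) ?_
    refine Algebra.subset_adjoin ⟨a.2, ?_, ?_, rfl⟩
    · omega
    · omega

lemma psum_mem (σ : Type*) [Fintype σ] (k : ℕ) :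
    psum σ K k ∈ Algebra.adjoin K
      {q : MvPolynomial σ K | ∃ i, 1 ≤ i ∧ i ≤ Fintype.card σ ∧ q = psum σ K i} := by
  classical
  rcases Nat.eq_zero_or_pos k with rfl | hk
  · rw [psum_zero]; exact Subalgebra.natCast_mem _ _
  obtain ⟨q, hq⟩ := esymmAlgHom_surjective (σ := σ) (R := K) (n := Fintype.card σ) le_rfl
      ⟨psum σ K k, psum_isSymmetric σ K k⟩
  have hval : psum σ K k = aeval (fun i : Fin (Fintype.card σ) => esymm σ K (i + 1)) q := by
    have h2 := congrArg Subtype.val hq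
    rw [esymmAlgHom_apply] at h2
    exact h2.symm
  rw [hval]
  have hmem : aeval (fun i : Fin (Fintype.card σ) => esymm σ K (i + 1)) q ∈
      Algebra.adjoin K (Set.range fun i : Fin (Fintype.card σ) => esymm σ K (i + 1)) := by
    rw [Algebra.adjoin_range_eq_range_aeval]; exact ⟨q, rfl⟩
  refine Algebra.adjoin_le ?_ hmem
  rintro x ⟨i, rfl⟩
  exact esymm_mem σ _

lemma pow_sum_mem {σ : Type*} [Fintype σ] {B : Type*} [CommRing B] [Algebra K B]
    (a : σ → B) (k : ℕ) :
    (∑ x, a x ^ k) ∈ Algebra.adjoin K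
      {b : B | ∃ j, 1 ≤ j ∧ j ≤ Fintype.card σ ∧ b = ∑ x, a x ^ j} := by
  have h := psum_mem (K := K) σ k
  have himg : (aeval a : MvPolynomial σ K →ₐ[K] B) (psum σ K k) = ∑ x, a x ^ k := by
    simp [psum]
  have hmap : (aeval a : MvPolynomial σ K →ₐ[K] B) (psum σ K k) ∈
      (Algebra.adjoin K
        {q : MvPolynomial σ K | ∃ i, 1 ≤ i ∧ i ≤ Fintype.card σ ∧ q = psum σ K i}).map
        (aeval a) :=
    Subalgebra.mem_map.mpr ⟨_, h, rfl⟩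
  rw [AlgHom.map_adjoin, himg] at hmap
  refine Algebra.adjoin_mono ?_ hmap
  rintro b ⟨q, ⟨j, h1, h2, rfl⟩, rfl⟩
  exact ⟨j, h1, h2, by simp [psum]⟩

end PowerSums

/-! ### Counting monomials of degree at most `g`: stars and bars -/

lemma card_bound (n g : ℕ) :
    ((univ : Finset (Fin n → Fin (g + 1))).filter fun v => (∑ i, (v i : ℕ)) ≤ g).card
      ≤ (n + g).choose n := by
  classical
  set F := (univ : Finset (Fin n → Fin (g + 1))).filter fun v => (∑ i, (v i : ℕ)) ≤ g with hF
  set msof : (Fin n → Fin (g + 1)) → Multiset (Fin (n + 1)) := fun u =>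
    (g - ∑ i, (u i : ℕ)) • {(0 : Fin (n+1))}
      + ∑ i, (u i : ℕ) • ({(i.succ : Fin (n+1))} : Multiset (Fin (n+1))) with hmsof
  have hcount : ∀ (u : Fin n → Fin (g+1)) (j : Fin n),
      Multiset.count (j.succ) (msof u) = (u j : ℕ) := by
    intro u j
    rw [hmsof]
    simp only
    rw [Multiset.count_add, Multiset.count_nsmul, Multiset.count_singleton,
      if_neg (Fin.succ_ne_zero j), mul_zero, zero_add, Multiset.count_sum']
    simp only [Multiset.count_nsmul, Multiset.count_singleton]
    rw [Finset.sum_eq_single j]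
    · simp
    · intro i _ hij
      rw [if_neg (by simpa [Fin.succ_inj, eq_comm] using hij), mul_zero]
    · simp
  have key : Fintype.card F ≤ Fintype.card (Sym (Fin (n + 1)) g) := by
    have hsum : ∀ v : F, (∑ i, ((v : Fin n → Fin (g+1)) i : ℕ)) ≤ g := by
      rintro ⟨v, hv⟩
      simpa [hF, Finset.mem_filter] using hv
    refine Fintype.card_le_of_injective (fun v => ⟨msof (v : Fin n → Fin (g+1)), ?_⟩) ?_
    · rw [hmsof]
      simp only [map_add, Multiset.card_nsmul, Multiset.card_singleton, mul_one]
      rw [Multiset.card_add, Multiset.card_nsmul, Multiset.card_singleton, mul_one, Multiset.card_sum]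
      simp only [Multiset.card_nsmul, Multiset.card_singleton, mul_one]
      have := hsum v
      omega
    · intro v w h
      have hms : msof (v : Fin n → Fin (g+1)) = msof (w : Fin n → Fin (g+1)) :=
        congrArg Subtype.val h
      apply Subtype.ext
      funext j
      refine Fin.val_injective ?_
      rw [← hcount (v : Fin n → Fin (g+1)) j, ← hcount (w : Fin n → Fin (g+1)) j, hms]
  rw [Fintype.card_coe] at key
  calc F.card ≤ Fintype.card (Sym (Fin (n + 1)) g) := key
    _ = (n + g).choose n := by
        rw [Sym.card_sym_eq_multichoose, Nat.multichoose_eq, Fintype.card_fin,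
          show n + 1 + g - 1 = n + g by omega, ← Nat.choose_symm (by omega : n ≤ n + g),
          show n + g - n = g by omega]

/-! ### The averaging (orbit-sum) operator -/

section Main

variable {K : Type*} [Field K] [CharZero K] {n : ℕ}
variable {G : Type*} [Group G] [Fintype G] (ρ : G →* (Matrix (Fin n) (Fin n) K)ˣ)

lemma act_act (σ τ : G) (p : MvPolynomial (Fin n) K) :
    polyAct (↑(ρ σ⁻¹)) (polyAct (↑(ρ τ⁻¹)) p) = polyAct (↑(ρ (σ * τ)⁻¹)) p := by
  rw [polyAct_polyAct]
  congr 1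
  rw [← Units.val_mul, ← map_mul, mul_inv_rev]

/-- The orbit-sum operator `p ↦ ∑ σ, σ • p`. -/
noncomputable def orbL : MvPolynomial (Fin n) K →ₗ[K] MvPolynomial (Fin n) K :=
  ∑ σ : G, (polyAct (↑(ρ σ⁻¹)) : MvPolynomial (Fin n) K →ₐ[K] MvPolynomial (Fin n) K).toLinearMap

lemma orbL_apply (p : MvPolynomial (Fin n) K) :
    orbL ρ p = ∑ σ : G, polyAct (↑(ρ σ⁻¹)) p := by
  simp [orbL]

lemma act_orbL (τ : G) (p : MvPolynomial (Fin n) K) :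
    polyAct (↑(ρ τ⁻¹)) (orbL ρ p) = orbL ρ p := by
  rw [orbL_apply, map_sum]
  exact Fintype.sum_bijective (fun σ => τ * σ) (Group.mulLeft_bijective τ) _ _
    (fun σ => act_act ρ τ σ p)

/-- The generators: orbit sums of monomials of degree at most `|G|`. -/
def gens : Set (MvPolynomial (Fin n) K) :=
  {q | ∃ β : Fin n →₀ ℕ, β.degree ≤ Fintype.card G ∧ q = orbL ρ (monomial β 1)}

lemma orbL_mem_of_totalDegree_le (p : MvPolynomial (Fin n) K)
    (hp : p.totalDegree ≤ Fintype.card G) :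
    orbL ρ p ∈ Algebra.adjoin K (gens ρ) := by
  have hrw : orbL ρ p = ∑ α ∈ p.support, (coeff α p) • orbL ρ (monomial α (1 : K)) := by
    conv_lhs => rw [p.as_sum]
    rw [map_sum]
    refine Finset.sum_congr rfl fun α _ => ?_
    rw [← map_smul, MvPolynomial.smul_monomial, smul_eq_mul, mul_one]
  rw [hrw]
  refine sum_mem fun α hα => ?_
  refine Subalgebra.smul_mem _ ?_ _
  refine Algebra.subset_adjoin ⟨α, ?_, rfl⟩
  exact le_trans (MvPolynomial.le_totalDegree hα) hp

lemma orbL_prod_mem (k : ℕ) (w : Fin k → Fin n) :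
    orbL ρ (∏ t, X (w t)) ∈ Algebra.adjoin K (gens ρ) := by
  classical
  by_cases hk : k ≤ Fintype.card G
  · apply orbL_mem_of_totalDegree_le
    refine le_trans (MvPolynomial.totalDegree_finset_prod _ _) (le_trans ?_ hk)
    calc ∑ t : Fin k, (X (w t) : MvPolynomial (Fin n) K).totalDegree
        = ∑ _t : Fin k, 1 := by simp [MvPolynomial.totalDegree_X]
      _ = k := by simp
      _ ≤ k := le_rfl
  · -- high degree: use polarization
    have h := polarization_sum (Γ := G) k
      (fun σ t => polyAct (K := K) (↑(ρ σ⁻¹)) (X (w t)))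
    simp only [← map_sum, ← map_prod] at h
    rw [← orbL_apply] at h
    have hLHS : ∑ S ∈ (univ : Finset (Fin k)).powerset,
        (-1 : MvPolynomial (Fin n) K) ^ (k - S.card) *
          (∑ σ : G, (polyAct (↑(ρ σ⁻¹)) (∑ t ∈ S, X (w t))) ^ k)
        ∈ Algebra.adjoin K (gens ρ) := by
      refine sum_mem fun S _ => ?_
      refine mul_mem (pow_mem (neg_mem (one_mem _)) _) ?_
      have hps := pow_sum_mem (K := K) (fun σ : G => polyAct (K := K) (↑(ρ σ⁻¹)) (∑ t ∈ S, X (w t))) k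
      refine Algebra.adjoin_le ?_ hps
      rintro b ⟨j, hj1, hjg, rfl⟩
      have hb : ∑ σ : G, (polyAct (↑(ρ σ⁻¹)) (∑ t ∈ S, X (w t))) ^ j
          = orbL ρ ((∑ t ∈ S, X (w t)) ^ j) := by
        rw [orbL_apply]
        exact Finset.sum_congr rfl fun σ _ => (map_pow _ _ _).symm
      rw [hb]
      apply orbL_mem_of_totalDegree_le
      refine le_trans (MvPolynomial.totalDegree_pow _ _) (le_trans ?_ hjg)
      have hb1 : (∑ t ∈ S, (X (w t) : MvPolynomial (Fin n) K)).totalDegree ≤ 1 := by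
        refine le_trans (MvPolynomial.totalDegree_finset_sum _ _) ?_
        exact Finset.sup_le fun t _ => le_of_eq (MvPolynomial.totalDegree_X _)
      calc j * (∑ t ∈ S, (X (w t) : MvPolynomial (Fin n) K)).totalDegree ≤ j * 1 :=
            Nat.mul_le_mul_left _ hb1
        _ = j := mul_one j
    rw [h] at hLHS
    have hfac : (k.factorial : K) ≠ 0 := Nat.cast_ne_zero.mpr (Nat.factorial_ne_zero k)
    have hfacC : (k.factorial : MvPolynomial (Fin n) K) = C (k.factorial : K) := by simp
    have : orbL ρ (∏ t, X (w t)) = C ((k.factorial : K)⁻¹) *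
        ((k.factorial : MvPolynomial (Fin n) K) * orbL ρ (∏ t, X (w t))) := by
      rw [hfacC, ← mul_assoc, ← C_mul, inv_mul_cancel₀ hfac, C_1, one_mul]
    rw [this]
    exact mul_mem (Subalgebra.algebraMap_mem _ _) hLHS

lemma exists_enum (α : Fin n →₀ ℕ) :
    ∃ (k : ℕ) (w : Fin k → Fin n), (monomial α (1 : K)) = ∏ t, X (w t) := by
  classical
  set l := (Finsupp.toMultiset α).toList with hl
  refine ⟨l.length, fun t => l.get t, ?_⟩
  rw [monomial_eq, C_1, one_mul]
  have h1 : (α.prod fun i e => (X i : MvPolynomial (Fin n) K) ^ e)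
      = ((Finsupp.toMultiset α).map (X : Fin n → MvPolynomial (Fin n) K)).prod := by
    rw [Finsupp.toMultiset_map, Finsupp.prod_toMultiset,
      Finsupp.prod_mapDomain_index (fun b => pow_zero b) (fun b m₁ m₂ => pow_add b m₁ m₂)]
  have h2 : ((Finsupp.toMultiset α).map (X : Fin n → MvPolynomial (Fin n) K)).prod
      = (l.map (X : Fin n → MvPolynomial (Fin n) K)).prod := by
    rw [hl, ← Multiset.prod_coe, ← Multiset.map_coe, Multiset.coe_toList]
  rw [h1, h2, ← Fin.prod_univ_fun_getElem]
  exact Finset.prod_congr rfl fun t _ => rfl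

lemma orbL_monomial_mem (α : Fin n →₀ ℕ) :
    orbL ρ (monomial α (1 : K)) ∈ Algebra.adjoin K (gens ρ) := by
  obtain ⟨k, w, hw⟩ := exists_enum (K := K) α
  rw [hw]
  exact orbL_prod_mem ρ k w

lemma orbL_mem (p : MvPolynomial (Fin n) K) : orbL ρ p ∈ Algebra.adjoin K (gens ρ) := by
  have hrw : orbL ρ p = ∑ α ∈ p.support, (coeff α p) • orbL ρ (monomial α (1 : K)) := by
    conv_lhs => rw [p.as_sum]
    rw [map_sum]
    refine Finset.sum_congr rfl fun α _ => ?_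
    rw [← map_smul, MvPolynomial.smul_monomial, smul_eq_mul, mul_one]
  rw [hrw]
  exact sum_mem fun α _ => Subalgebra.smul_mem _ (orbL_monomial_mem ρ α) _

lemma orbL_isHomogeneous (β : Fin n →₀ ℕ) :
    (orbL ρ (monomial β (1 : K))).IsHomogeneous β.degree := by
  rw [orbL_apply]
  exact MvPolynomial.IsHomogeneous.sum _ _ _
    (fun σ _ => polyAct_isHomogeneous _ (isHomogeneous_monomial _ rfl))

end Main

end NoetherProof


open NoetherProof Finset in
/-- **Noether's bound.**  Let `K` be a field of characteristic zero and let a finite group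
`G` act linearly on `K^n`.  Then the invariant ring `K[X_1,…,X_n]^G` is generated as a
`K`-algebra by at most `(n + |G|).choose n` homogeneous invariant polynomials, each of
degree at most `|G|`. -/
theorem noether_bound {K : Type*} [Field K] [CharZero K] {n : ℕ}
    {G : Type*} [Group G] [Fintype G]
    (ρ : G →* (Matrix (Fin n) (Fin n) K)ˣ) :
    ∃ (m : ℕ), m ≤ (n + Fintype.card G).choose n ∧
      ∃ π : Fin m → MvPolynomial (Fin n) K,
        (∀ i, (∀ g : G, polyAct (↑(ρ g⁻¹)) (π i) = π i) ∧
          ∃ d ≤ Fintype.card G, (π i).IsHomogeneous d) ∧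
        ∀ f : MvPolynomial (Fin n) K, (∀ g : G, polyAct (↑(ρ g⁻¹)) f = f) →
          f ∈ Algebra.adjoin K (Set.range π) := by
  classical
  have hgpos : 0 < Fintype.card G := Fintype.card_pos
  have hgK : ((Fintype.card G : K)) ≠ 0 := Nat.cast_ne_zero.mpr (by omega)
  set gc := Fintype.card G with hgc
  set F := (univ : Finset (Fin n → Fin (gc + 1))).filter (fun v => (∑ i, (v i : ℕ)) ≤ gc)
    with hF
  have hcard : F.card ≤ (n + gc).choose n := card_bound n gc
  let e : ↥F ≃ Fin F.card := Fintype.equivFinOfCardEq (Fintype.card_coe F)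
  let βof : (Fin n → Fin (gc + 1)) → (Fin n →₀ ℕ) :=
    fun v => Finsupp.equivFunOnFinite.symm (fun j => (v j : ℕ))
  have hdeg : ∀ v : Fin n → Fin (gc + 1), (βof v).degree = ∑ j, (v j : ℕ) := by
    intro v
    rw [Finsupp.degree]
    refine Finset.sum_subset (Finset.subset_univ _) ?_
    intro x _ hx
    exact Finsupp.notMem_support_iff.mp hx
  let π : Fin F.card → MvPolynomial (Fin n) K :=
    fun i => (gc : K)⁻¹ • orbL ρ (monomial (βof ((e.symm i : ↥F) : Fin n → Fin (gc + 1))) 1)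
  refine ⟨F.card, hcard, π, fun i => ⟨?_, ?_⟩, ?_⟩
  · -- invariance
    intro g
    show polyAct (↑(ρ g⁻¹)) ((gc : K)⁻¹ • orbL ρ _) = _
    rw [map_smul, act_orbL]
  · -- homogeneity
    refine ⟨(βof ((e.symm i : ↥F) : Fin n → Fin (gc + 1))).degree, ?_, ?_⟩
    · obtain ⟨v, hv⟩ := (e.symm i : ↥F)
      simp only [hF, Finset.mem_filter, Finset.mem_univ, true_and] at hv
      rw [hdeg]
      exact hv
    · show ((gc : K)⁻¹ • orbL ρ _).IsHomogeneous _
      rw [smul_eq_C_mul]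
      simpa using (isHomogeneous_C (Fin n) ((gc : K)⁻¹)).mul (orbL_isHomogeneous ρ _)
  · -- generation
    intro f hf
    have horb : (gc : K) • f = orbL ρ f := by
      rw [orbL_apply]
      rw [Finset.sum_congr rfl (fun σ _ => hf σ), Finset.sum_const, Finset.card_univ,
        ← hgc, ← Nat.cast_smul_eq_nsmul K]
    have hf2 : f = (gc : K)⁻¹ • orbL ρ f := by
      rw [← horb, smul_smul, inv_mul_cancel₀ hgK, one_smul]
    have hsub : gens ρ ⊆ ↑(Algebra.adjoin K (Set.range π)) := by
      rintro q ⟨β, hβ, rfl⟩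
      have hβj : ∀ j, β j < gc + 1 := by
        intro j
        exact Nat.lt_succ_of_le (le_trans (Finsupp.le_degree j β) hβ)
      set v : Fin n → Fin (gc + 1) := fun j => ⟨β j, hβj j⟩ with hv
      have hβv : βof v = β := Finsupp.ext fun j => rfl
      have hvF : v ∈ F := by
        simp only [hF, Finset.mem_filter, Finset.mem_univ, true_and]
        have : ∑ j, (v j : ℕ) = β.degree := by
          rw [← hβv, hdeg]
        rw [this]
        exact hβ
      have hrepr : orbL ρ (monomial β (1 : K)) = (gc : K) • π (e ⟨v, hvF⟩) := by
        show _ = (gc : K) • ((gc : K)⁻¹ • orbL ρ (monomial (βof ((e.symm (e ⟨v, hvF⟩) : ↥F) :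
          Fin n → Fin (gc + 1))) 1))
        rw [e.symm_apply_apply, smul_smul, mul_inv_cancel₀ hgK, one_smul]
        exact congrArg _ (congrArg (fun γ => monomial γ (1 : K)) hβv.symm)
      rw [hrepr]
      exact Subalgebra.smul_mem _ (Algebra.subset_adjoin (Set.mem_range_self (e ⟨v, hvF⟩))) _
    rw [hf2]
    exact Subalgebra.smul_mem _ (Algebra.adjoin_le hsub (orbL_mem ρ f)) _
end

section
/- Let G be a finite group acting linearly on ℂ^n, hence on ℂ[X_1, …, X_n], and let χ be an irreducible (complex) character of G. Let ℂ[X]^χ denote the isotypic component of type χ, i.e. the image of the projection π_χ : f ↦ (χ(1)/|G|) Σ_{g ∈ G} conj(χ(g)) f^g. Then ℂ[X]^χ is a finitely generated module over the invariant ring ℂ[X]^G, and it is generated by homogeneous elements of degree not exceeding |G|. In particular, ℂ[X_1, …, X_n] itself is a finitely generated ℂ[X]^G-module. -/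
open MvPolynomial CategoryTheory

set_option linter.unusedSectionVars false

section NoetherAux

variable {n : ℕ} {G : Type} [Group G] [Fintype G]

lemma polyAct_comp (M N : Matrix (Fin n) (Fin n) ℂ) (f : MvPolynomial (Fin n) ℂ) :
    polyAct M (polyAct N f) = polyAct (N * M) f := by
  have : (polyAct M).comp (polyAct N) = polyAct (N * M) := by
    apply MvPolynomial.algHom_ext
    intro i
    simp [polyAct, map_sum, Matrix.mul_apply, Finset.smul_sum, smul_smul]
    rw [Finset.sum_comm]
    simp [Finset.sum_smul]
  exact DFunLike.congr_fun this f

lemma polyAct_one (f : MvPolynomial (Fin n) ℂ) :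
    polyAct (1 : Matrix (Fin n) (Fin n) ℂ) f = f := by
  have : polyAct (1 : Matrix (Fin n) (Fin n) ℂ) = AlgHom.id ℂ _ := by
    apply MvPolynomial.algHom_ext
    intro i
    simp [polyAct, Matrix.one_apply, Finset.sum_ite_eq]
  rw [this]; rfl

lemma polyAct_isHomogeneous (M : Matrix (Fin n) (Fin n) ℂ) {f : MvPolynomial (Fin n) ℂ}
    {d : ℕ} (hf : f.IsHomogeneous d) : (polyAct M f).IsHomogeneous d := by
  have h1 : ∀ i, (∑ j, M i j • (X j : MvPolynomial (Fin n) ℂ)).IsHomogeneous 1 := by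
    intro i
    apply IsHomogeneous.sum
    intro j _
    rw [smul_eq_C_mul]
    exact isHomogeneous_C_mul_X _ _
  simpa [polyAct] using hf.aeval _ h1

variable (ρ : G →* (Matrix (Fin n) (Fin n) ℂ)ˣ)

/-- The action of `g ∈ G` on polynomials. -/
noncomputable def act (g : G) : MvPolynomial (Fin n) ℂ →ₐ[ℂ] MvPolynomial (Fin n) ℂ :=
  polyAct (↑(ρ g⁻¹))

lemma act_act (g h : G) (f : MvPolynomial (Fin n) ℂ) :
    act ρ g (act ρ h f) = act ρ (g * h) f := by
  show polyAct _ (polyAct _ f) = _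
  rw [polyAct_comp]
  show polyAct _ f = polyAct (↑(ρ (g * h)⁻¹)) f
  rw [← Units.val_mul, ← map_mul, ← mul_inv_rev]

lemma act_one (f : MvPolynomial (Fin n) ℂ) : act ρ 1 f = f := by
  show polyAct _ f = f
  rw [inv_one, map_one, Units.val_one, polyAct_one]

/-- The invariant subalgebra. -/
noncomputable def invar : Subalgebra ℂ (MvPolynomial (Fin n) ℂ) where
  carrier := {f | ∀ g, act ρ g f = f}
  mul_mem' := fun ha hb g => by rw [map_mul, ha g, hb g]
  add_mem' := fun ha hb g => by rw [map_add, ha g, hb g]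
  algebraMap_mem' := fun c g => (act ρ g).commutes c

lemma neg_invar {a : MvPolynomial (Fin n) ℂ} (ha : a ∈ invar ρ) : -a ∈ invar ρ :=
  fun g => by rw [map_neg, ha g]

/-- The weighted averaging (projection) operator. -/
noncomputable def projL (c : G → ℂ) (e : ℂ) :
    MvPolynomial (Fin n) ℂ →ₗ[ℂ] MvPolynomial (Fin n) ℂ :=
  e • ∑ g : G, c g • (act ρ g).toLinearMap

lemma projL_apply (c : G → ℂ) (e : ℂ) (f : MvPolynomial (Fin n) ℂ) :
    projL ρ c e f = e • ∑ g : G, c g • act ρ g f := by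
  simp [projL]

lemma algHom_esymm (ψ : MvPolynomial (Fin n) ℂ →ₐ[ℂ] MvPolynomial (Fin n) ℂ)
    (s : Multiset (MvPolynomial (Fin n) ℂ)) (j : ℕ) :
    ψ (s.esymm j) = (s.map ψ).esymm j := by
  simp only [Multiset.esymm, map_multiset_sum, Multiset.map_map, Function.comp_def,
    map_multiset_prod, Multiset.powersetCard_map]

/-- `j`-th elementary symmetric function of the negated orbit of `r`. -/
noncomputable def esymAt (r : MvPolynomial (Fin n) ℂ) (j : ℕ) : MvPolynomial (Fin n) ℂ :=
  Multiset.esymm (Multiset.map (fun h => -(act ρ h r)) Finset.univ.val) j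

lemma esymAt_invar (r : MvPolynomial (Fin n) ℂ) (j : ℕ) : esymAt ρ r j ∈ invar ρ := by
  intro g
  show act ρ g (Multiset.esymm _ j) = _
  rw [algHom_esymm]
  unfold esymAt
  congr 1
  rw [Multiset.map_map]
  have : (Finset.univ.val : Multiset G) =
      Multiset.map (fun h => g * h) Finset.univ.val := by
    conv_lhs => rw [← Finset.map_univ_equiv (Equiv.mulLeft g)]
    rfl
  conv_rhs => rw [this, Multiset.map_map]
  congr 1
  funext h
  simp [Function.comp, map_neg, act_act]

lemma pow_card_eq (r : MvPolynomial (Fin n) ℂ) (g : G) :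
    (act ρ g r) ^ (Fintype.card G) =
      ∑ j ∈ Finset.Icc 1 (Fintype.card G),
        (-(esymAt ρ r j)) * (act ρ g r) ^ (Fintype.card G - j) := by
  classical
  set N := Fintype.card G with hN
  set m : Multiset (MvPolynomial (Fin n) ℂ) :=
    Multiset.map (fun h => -(act ρ h r)) Finset.univ.val with hm
  have hcard : Multiset.card m = N := by
    simp [hm, hN]
  have h0 : Polynomial.eval (act ρ g r)
      ((m.map fun t => Polynomial.X + Polynomial.C t).prod) = 0 := by
    rw [Polynomial.eval_multiset_prod, Multiset.map_map]
    apply Multiset.prod_eq_zero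
    simp only [Multiset.mem_map, Function.comp_apply]
    exact ⟨-(act ρ g r), by simp [hm], by simp⟩
  rw [Multiset.prod_X_add_C_eq_sum_esymm] at h0
  rw [hcard] at h0
  simp only [Polynomial.eval_finset_sum, Polynomial.eval_mul, Polynomial.eval_C,
    Polynomial.eval_pow, Polynomial.eval_X] at h0
  have hins : Finset.range (N + 1) = insert 0 (Finset.Icc 1 N) := by
    ext j; simp [Finset.mem_range, Finset.mem_Icc]; omega
  rw [hins, Finset.sum_insert (by simp)] at h0
  have he0 : m.esymm 0 = 1 := by simp [Multiset.esymm]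
  rw [he0, one_mul, Nat.sub_zero] at h0
  have := eq_neg_of_add_eq_zero_left h0
  rw [this, ← Finset.sum_neg_distrib]
  apply Finset.sum_congr rfl
  intro j _
  have : esymAt ρ r j = m.esymm j := by rw [esymAt, hm]
  rw [this, neg_mul]

lemma pow_ge_card_eq (r : MvPolynomial (Fin n) ℂ) (g : G) (d : ℕ) (hd : Fintype.card G ≤ d) :
    (act ρ g r) ^ d =
      ∑ j ∈ Finset.Icc 1 (Fintype.card G),
        (-(esymAt ρ r j)) * (act ρ g r) ^ (d - j) := by
  set N := Fintype.card G
  have : (act ρ g r) ^ d = (act ρ g r) ^ (d - N) * (act ρ g r) ^ N := by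
    rw [← pow_add]; congr 1; omega
  rw [this, pow_card_eq, Finset.mul_sum]
  apply Finset.sum_congr rfl
  intro j hj
  rw [Finset.mem_Icc] at hj
  rw [mul_left_comm, ← pow_add]
  congr 2
  omega

/-- Generating set: images of monomials of degree at most `|G|`. -/
def gensSet (c : G → ℂ) (e : ℂ) : Set (MvPolynomial (Fin n) ℂ) :=
  {x | ∃ α : Fin n →₀ ℕ, α.degree ≤ Fintype.card G ∧ x = projL ρ c e (monomial α 1)}

noncomputable def Msub (c : G → ℂ) (e : ℂ) : Submodule (invar ρ) (MvPolynomial (Fin n) ℂ) :=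
  Submodule.span (invar ρ) (gensSet ρ c e)

lemma mul_mem_Msub {c : G → ℂ} {e : ℂ} {a x : MvPolynomial (Fin n) ℂ}
    (ha : a ∈ invar ρ) (hx : x ∈ Msub ρ c e) : a * x ∈ Msub ρ c e := by
  have := (Msub ρ c e).smul_mem (⟨a, ha⟩ : invar ρ) hx
  rwa [Algebra.smul_def] at this

lemma csmul_mem_Msub {c : G → ℂ} {e : ℂ} (t : ℂ) {x : MvPolynomial (Fin n) ℂ}
    (hx : x ∈ Msub ρ c e) : t • x ∈ Msub ρ c e := by
  have hC : (C t : MvPolynomial (Fin n) ℂ) ∈ invar ρ := by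
    have := (invar ρ).algebraMap_mem t
    simpa [algebraMap_eq] using this
  have := mul_mem_Msub ρ hC hx
  rwa [← smul_eq_C_mul] at this

lemma lowdeg_mem_Msub (c : G → ℂ) (e : ℂ) (q : MvPolynomial (Fin n) ℂ)
    (hq : q.totalDegree ≤ Fintype.card G) : projL ρ c e q ∈ Msub ρ c e := by
  rw [← q.support_sum_monomial_coeff, map_sum]
  apply Submodule.sum_mem
  intro α hα
  have h1 : (monomial α (coeff α q)) = (coeff α q) • monomial α 1 := by
    rw [smul_monomial, smul_eq_mul, mul_one]
  rw [h1, map_smul]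
  apply csmul_mem_Msub
  apply Submodule.subset_span
  refine ⟨α, ?_, rfl⟩
  have := MvPolynomial.le_totalDegree (s := α) (p := q) hα
  calc α.degree = α.sum fun _ e => e := by rw [Finsupp.degree, Finsupp.sum]; rfl
  _ ≤ q.totalDegree := this
  _ ≤ Fintype.card G := hq

lemma projL_pow_rec (c : G → ℂ) (e : ℂ) (f : MvPolynomial (Fin n) ℂ) (d : ℕ)
    (hd : Fintype.card G ≤ d) :
    projL ρ c e (f ^ d) = ∑ j ∈ Finset.Icc 1 (Fintype.card G),
      (-(esymAt ρ f j)) * projL ρ c e (f ^ (d - j)) := by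
  set N := Fintype.card G
  calc projL ρ c e (f ^ d) = e • ∑ g : G, c g • (act ρ g f) ^ d := by
        rw [projL_apply]; simp [map_pow]
    _ = e • ∑ g : G, c g • ∑ j ∈ Finset.Icc 1 N,
          (-(esymAt ρ f j)) * (act ρ g f) ^ (d - j) := by
        congr 1
        refine Finset.sum_congr rfl fun g _ => ?_
        rw [pow_ge_card_eq ρ f g d hd]
    _ = e • ∑ g : G, ∑ j ∈ Finset.Icc 1 N,
          c g • ((-(esymAt ρ f j)) * (act ρ g f) ^ (d - j)) := by
        congr 1
        refine Finset.sum_congr rfl fun g _ => ?_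
        rw [Finset.smul_sum]
    _ = e • ∑ j ∈ Finset.Icc 1 N, ∑ g : G,
          c g • ((-(esymAt ρ f j)) * (act ρ g f) ^ (d - j)) := by
        rw [Finset.sum_comm]
    _ = ∑ j ∈ Finset.Icc 1 N,
          (-(esymAt ρ f j)) * (e • ∑ g : G, c g • (act ρ g f) ^ (d - j)) := by
        rw [Finset.smul_sum]
        refine Finset.sum_congr rfl fun j _ => ?_
        rw [mul_smul_comm, Finset.mul_sum]
        congr 1
        refine Finset.sum_congr rfl fun g _ => ?_
        rw [mul_smul_comm]
    _ = ∑ j ∈ Finset.Icc 1 N, (-(esymAt ρ f j)) * projL ρ c e (f ^ (d - j)) := by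
        refine Finset.sum_congr rfl fun j _ => ?_
        rw [projL_apply]; simp [map_pow]

lemma pow_mem_Msub (c : G → ℂ) (e : ℂ) :
    ∀ d : ℕ, ∀ f : MvPolynomial (Fin n) ℂ, f.totalDegree ≤ 1 →
      projL ρ c e (f ^ d) ∈ Msub ρ c e := by
  intro d
  induction d using Nat.strong_induction_on with
  | _ d IH =>
    intro f hf
    by_cases hdN : d ≤ Fintype.card G
    · apply lowdeg_mem_Msub
      calc (f ^ d).totalDegree ≤ d * f.totalDegree := totalDegree_pow f d
        _ ≤ d * 1 := Nat.mul_le_mul_left d hf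
        _ ≤ Fintype.card G := by omega
    · push_neg at hdN
      rw [projL_pow_rec ρ c e f d (le_of_lt hdN)]
      apply Submodule.sum_mem
      intro j hj
      rw [Finset.mem_Icc] at hj
      have h1 : Fintype.card G ≥ 1 := Fintype.card_pos
      exact mul_mem_Msub ρ (neg_invar ρ (esymAt_invar ρ f j))
        (IH (d - j) (by omega) f hf)

lemma vandermonde_span {M : Type*} [AddCommGroup M] [Module ℂ M] (m : ℕ)
    (z : Fin (m + 1) → M) (V : Submodule ℂ M)
    (h : ∀ t : ℂ, (∑ j : Fin (m + 1), t ^ (j : ℕ) • z j) ∈ V) : ∀ j, z j ∈ V := by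
  intro j
  set B : Matrix (Fin (m + 1)) (Fin (m + 1)) ℂ :=
    Matrix.vandermonde (fun i => ((i : ℕ) : ℂ)) with hB
  have hdet : IsUnit B.det := by
    rw [isUnit_iff_ne_zero, hB, Matrix.det_vandermonde]
    rw [Finset.prod_ne_zero_iff]
    intro i _
    rw [Finset.prod_ne_zero_iff]
    intro l hl
    rw [Finset.mem_Ioi] at hl
    have : (i : ℕ) < (l : ℕ) := hl
    rw [sub_ne_zero]
    exact_mod_cast Nat.ne_of_gt this
  have hBinv : B⁻¹ * B = 1 := Matrix.nonsing_inv_mul B hdet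
  have key : ∀ i : Fin (m + 1), (∑ k, B i k • z k) ∈ V := by
    intro i
    simp only [hB, Matrix.vandermonde_apply]
    exact h ((i : ℕ) : ℂ)
  have hz : z j = ∑ i, (B⁻¹ j i) • ∑ k, B i k • z k := by
    calc z j = ∑ k, ((1 : Matrix (Fin (m+1)) (Fin (m+1)) ℂ) j k) • z k := by
          simp [Matrix.one_apply]
      _ = ∑ k, ((B⁻¹ * B) j k) • z k := by rw [hBinv]
      _ = ∑ k, ∑ i, (B⁻¹ j i * B i k) • z k := by
          simp [Matrix.mul_apply, Finset.sum_smul]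
      _ = ∑ i, ∑ k, (B⁻¹ j i * B i k) • z k := Finset.sum_comm
      _ = ∑ i, (B⁻¹ j i) • ∑ k, B i k • z k := by
          simp [Finset.smul_sum, smul_smul]
  rw [hz]
  exact Submodule.sum_mem _ fun i _ => Submodule.smul_mem _ _ (key i)

lemma mul_pow_mem_span (u v : MvPolynomial (Fin n) ℂ) (d a b : ℕ) (hab : a + b = d) :
    u ^ a * v ^ b ∈ Submodule.span ℂ
      {q : MvPolynomial (Fin n) ℂ | ∃ t : ℂ, q = (t • u + v) ^ d} := by
  have expand : ∀ t : ℂ, (t • u + v) ^ d = ∑ j : Fin (d + 1),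
      t ^ (j : ℕ) • (((d.choose (j : ℕ) : ℕ) : ℂ) • (u ^ (j : ℕ) * v ^ (d - (j : ℕ)))) := by
    intro t
    rw [add_pow, ← Fin.sum_univ_eq_sum_range
      (fun k => (t • u) ^ k * v ^ (d - k) * ((d.choose k : ℕ) : MvPolynomial (Fin n) ℂ))]
    refine Finset.sum_congr rfl fun j _ => ?_
    simp only [Nat.cast_smul_eq_nsmul, nsmul_eq_mul, smul_eq_C_mul, map_pow]
    ring
  have hmem : ∀ j : Fin (d + 1),
      (((d.choose (j : ℕ) : ℕ) : ℂ) • (u ^ (j : ℕ) * v ^ (d - (j : ℕ)))) ∈ Submodule.span ℂ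
        {q : MvPolynomial (Fin n) ℂ | ∃ t : ℂ, q = (t • u + v) ^ d} := by
    apply vandermonde_span
    intro t
    rw [← expand t]
    exact Submodule.subset_span ⟨t, rfl⟩
  have hc : ((d.choose a : ℕ) : ℂ) ≠ 0 :=
    Nat.cast_ne_zero.mpr (Nat.choose_pos (by omega : a ≤ d)).ne'
  have h1 := hmem ⟨a, by omega⟩
  have hval : ((⟨a, by omega⟩ : Fin (d + 1)) : ℕ) = a := rfl
  rw [hval] at h1
  have hba : d - a = b := by omega
  rw [hba] at h1
  have h2 := Submodule.smul_mem _ (((d.choose a : ℕ) : ℂ)⁻¹) h1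
  rwa [smul_smul, inv_mul_cancel₀ hc, one_smul] at h2

lemma monomial_mem_span_pows (α : Fin n →₀ ℕ) :
    (monomial α (1 : ℂ)) ∈ Submodule.span ℂ
      {q : MvPolynomial (Fin n) ℂ | ∃ f : MvPolynomial (Fin n) ℂ,
        f.totalDegree ≤ 1 ∧ q = f ^ α.degree} := by
  induction α using Finsupp.induction with
  | zero =>
    apply Submodule.subset_span
    exact ⟨0, by simp, by simp [map_zero]⟩
  | single_add i b β hiβ hb IH =>
    have hdeg : (Finsupp.single i b + β).degree = b + β.degree := by
      simp only [Finsupp.degree_eq_weight_one, map_add]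
      congr 1
      simp [Finsupp.weight_apply, Finsupp.sum_single_index]
    have hmono : (monomial (Finsupp.single i b + β) (1 : ℂ)) =
        X i ^ b * monomial β 1 := by
      rw [X_pow_eq_monomial, monomial_mul, one_mul]
    rw [hdeg, hmono]
    have claim : ∀ q ∈ Submodule.span ℂ
        {q : MvPolynomial (Fin n) ℂ | ∃ f : MvPolynomial (Fin n) ℂ,
          f.totalDegree ≤ 1 ∧ q = f ^ β.degree},
        X i ^ b * q ∈ Submodule.span ℂ
          {q : MvPolynomial (Fin n) ℂ | ∃ f : MvPolynomial (Fin n) ℂ,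
            f.totalDegree ≤ 1 ∧ q = f ^ (b + β.degree)} := by
      intro q hq
      induction hq using Submodule.span_induction with
      | mem x hx =>
        obtain ⟨f, hf, rfl⟩ := hx
        have h1 := mul_pow_mem_span (X i) f (b + β.degree) b β.degree rfl
        refine Submodule.span_le.mpr ?_ h1
        rintro y ⟨t, rfl⟩
        apply Submodule.subset_span
        refine ⟨t • X i + f, ?_, rfl⟩
        refine le_trans (totalDegree_add _ _) (max_le ?_ hf)
        exact le_trans (totalDegree_smul_le t (X i)) (le_of_eq (totalDegree_X i))
      | zero => rw [mul_zero]; exact Submodule.zero_mem _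
      | add x y _ _ hx hy => rw [mul_add]; exact Submodule.add_mem _ hx hy
      | smul t x _ hx => rw [mul_smul_comm]; exact Submodule.smul_mem _ _ hx
    exact claim _ IH

lemma projL_mem_Msub (c : G → ℂ) (e : ℂ) (f : MvPolynomial (Fin n) ℂ) :
    projL ρ c e f ∈ Msub ρ c e := by
  rw [← f.support_sum_monomial_coeff, map_sum]
  apply Submodule.sum_mem
  intro α _
  have h1 : (monomial α (coeff α f)) = (coeff α f) • monomial α 1 := by
    rw [smul_monomial, smul_eq_mul, mul_one]
  rw [h1, map_smul]
  apply csmul_mem_Msub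
  have hA := monomial_mem_span_pows (n := n) α
  refine Submodule.span_induction
    (p := fun x _ => projL ρ c e x ∈ Msub ρ c e) ?_ ?_ ?_ ?_ hA
  · rintro x ⟨f', hf', rfl⟩
    exact pow_mem_Msub ρ c e α.degree f' hf'
  · show projL ρ c e 0 ∈ Msub ρ c e
    rw [map_zero]; exact Submodule.zero_mem _
  · intro x y _ _ hx hy
    show projL ρ c e (x + y) ∈ Msub ρ c e
    rw [map_add]; exact Submodule.add_mem _ hx hy
  · intro t x _ hx
    show projL ρ c e (t • x) ∈ Msub ρ c e
    rw [map_smul]; exact csmul_mem_Msub ρ t hx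

lemma projL_isHomogeneous (c : G → ℂ) (e : ℂ) {q : MvPolynomial (Fin n) ℂ} {d : ℕ}
    (hq : q.IsHomogeneous d) : (projL ρ c e q).IsHomogeneous d := by
  rw [projL_apply, smul_eq_C_mul]
  apply IsHomogeneous.C_mul
  apply IsHomogeneous.sum
  intro g _
  rw [smul_eq_C_mul]
  exact (polyAct_isHomogeneous _ hq).C_mul _

/-- The exponent multi-index associated to a bounded exponent vector. -/
noncomputable def αof (N : ℕ) (v : Fin n → Fin (N + 1)) : Fin n →₀ ℕ :=
  Finsupp.equivFunOnFinite.symm (fun i => (v i : ℕ))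

lemma master (c : G → ℂ) (e : ℂ) :
    ∃ (k : ℕ) (h : Fin k → MvPolynomial (Fin n) ℂ),
      (∀ i, (∃ q, h i = projL ρ c e q) ∧ ∃ d ≤ Fintype.card G, (h i).IsHomogeneous d) ∧
      (∀ f : MvPolynomial (Fin n) ℂ, ∃ cc : Fin k → MvPolynomial (Fin n) ℂ,
        (∀ i g, act ρ g (cc i) = cc i) ∧ projL ρ c e f = ∑ i, cc i * h i) := by
  classical
  set N := Fintype.card G with hN
  set eqv := (Fintype.equivFin (Fin n → Fin (N + 1))) with heqv
  set h : Fin (Fintype.card (Fin n → Fin (N + 1))) → MvPolynomial (Fin n) ℂ :=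
    fun i => if (αof N (eqv.symm i)).degree ≤ N
      then projL ρ c e (monomial (αof N (eqv.symm i)) 1) else 0 with hh
  refine ⟨_, h, fun i => ?_, fun f => ?_⟩
  · constructor
    · by_cases hc : (αof N (eqv.symm i)).degree ≤ N
      · exact ⟨monomial (αof N (eqv.symm i)) 1, by rw [hh]; simp [hc]⟩
      · exact ⟨0, by rw [hh]; simp [hc, map_zero]⟩
    · by_cases hc : (αof N (eqv.symm i)).degree ≤ N
      · refine ⟨(αof N (eqv.symm i)).degree, hc, ?_⟩
        rw [hh]; simp only [hc, if_true]
        exact projL_isHomogeneous ρ c e (isHomogeneous_monomial 1 rfl)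
      · refine ⟨0, Nat.zero_le _, ?_⟩
        rw [hh]; simp only [hc, if_false]
        exact isHomogeneous_zero _ _ _
  · have hsub : gensSet ρ c e ⊆ Set.range h := by
      rintro x ⟨α, hα, rfl⟩
      have hbd : ∀ i, α i < N + 1 := fun i =>
        Nat.lt_succ_of_le (le_trans (Finsupp.le_degree i α) hα)
      set v : Fin n → Fin (N + 1) := fun i => ⟨α i, hbd i⟩ with hv
      have hαv : αof N v = α := by
        ext i
        show (Finsupp.equivFunOnFinite.symm (fun i => ((v i : ℕ)))) i = α i
        simp [hv]
      refine ⟨eqv v, ?_⟩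
      rw [hh]
      simp only [Equiv.symm_apply_apply, hαv, show α.degree ≤ N from hα, if_true]
    have hf : projL ρ c e f ∈ Submodule.span (invar ρ) (Set.range h) :=
      Submodule.span_mono hsub (projL_mem_Msub ρ c e f)
    obtain ⟨cc, hcc⟩ := (Submodule.mem_span_range_iff_exists_fun (invar ρ)).mp hf
    refine ⟨fun i => ↑(cc i), fun i g => (cc i).2 g, ?_⟩
    rw [← hcc]
    exact Finset.sum_congr rfl fun i _ => Algebra.smul_def _ _

lemma projL_id [DecidableEq G] (f : MvPolynomial (Fin n) ℂ) :
    projL ρ (fun g => if g = 1 then (1 : ℂ) else 0) 1 f = f := by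
  rw [projL_apply, one_smul]
  have : ∀ g : G, (if g = 1 then (1 : ℂ) else 0) • act ρ g f
      = if g = 1 then act ρ g f else 0 := by
    intro g; split <;> simp
  rw [Finset.sum_congr rfl fun g _ => this g, Finset.sum_ite_eq' Finset.univ (1 : G)]
  simp [act_one]

theorem isotypic_component_finitely_generated' {n : ℕ} {G : Type} [Group G] [Fintype G]
    (ρ : G →* (Matrix (Fin n) (Fin n) ℂ)ˣ)
    (χ : G → ℂ)
    (piχ : MvPolynomial (Fin n) ℂ → MvPolynomial (Fin n) ℂ)
    (hpiχ : ∀ f, piχ f = (χ 1 / (Fintype.card G : ℂ)) •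
      ∑ g : G, (starRingEnd ℂ) (χ g) • polyAct (↑(ρ g⁻¹)) f) :
    (∃ (k : ℕ) (h : Fin k → MvPolynomial (Fin n) ℂ),
      (∀ i, h i ∈ Set.range piχ ∧ ∃ d ≤ Fintype.card G, (h i).IsHomogeneous d) ∧
      ∀ f ∈ Set.range piχ, ∃ c : Fin k → MvPolynomial (Fin n) ℂ,
        (∀ i, ∀ g : G, polyAct (↑(ρ g⁻¹)) (c i) = c i) ∧ f = ∑ i, c i * h i) ∧
    (∃ (k : ℕ) (h : Fin k → MvPolynomial (Fin n) ℂ),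
      ∀ f : MvPolynomial (Fin n) ℂ, ∃ c : Fin k → MvPolynomial (Fin n) ℂ,
        (∀ i, ∀ g : G, polyAct (↑(ρ g⁻¹)) (c i) = c i) ∧ f = ∑ i, c i * h i) := by
  classical
  constructor
  · set c1 : G → ℂ := fun g => (starRingEnd ℂ) (χ g) with hc1
    set e1 : ℂ := χ 1 / (Fintype.card G : ℂ) with he1
    have hp : ∀ f, piχ f = projL ρ c1 e1 f := by
      intro f
      rw [hpiχ, projL_apply]
      rfl
    obtain ⟨k, h, hprop, hgen⟩ := master ρ c1 e1
    refine ⟨k, h, fun i => ⟨?_, (hprop i).2⟩, fun f hf => ?_⟩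
    · obtain ⟨q, hq⟩ := (hprop i).1
      exact ⟨q, by rw [hp q, ← hq]⟩
    · obtain ⟨f0, rfl⟩ := hf
      obtain ⟨cc, hinv, heq⟩ := hgen f0
      exact ⟨cc, fun i g => hinv i g, by rw [hp f0]; exact heq⟩
  · obtain ⟨k, h, _, hgen⟩ := master ρ (fun g => if g = 1 then (1 : ℂ) else 0) 1
    refine ⟨k, h, fun f => ?_⟩
    obtain ⟨cc, hinv, heq⟩ := hgen f
    rw [projL_id] at heq
    exact ⟨cc, fun i g => hinv i g, heq⟩

end NoetherAux

/-- **Isotypic components are finitely generated modules over the invariant ring.**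
Let the finite group `G` act linearly on `ℂ^n` and hence on `ℂ[X_1,…,X_n]`, let `χ` be the
character of an irreducible complex representation of `G`, and let `ℂ[X]^χ` be the
corresponding isotypic component, i.e. the image of the projection
`π_χ : f ↦ (χ(1)/|G|) Σ_g conj(χ g) f^g`.  Then `ℂ[X]^χ` is generated as a module over the
invariant ring `ℂ[X]^G` by finitely many homogeneous elements of degree at most `|G|`;
in particular `ℂ[X]` itself is a finitely generated `ℂ[X]^G`-module. -/
theorem isotypic_component_finitely_generated {n : ℕ} {G : Type} [Group G] [Fintype G]
    (ρ : G →* (Matrix (Fin n) (Fin n) ℂ)ˣ)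
    (V : FDRep ℂ G) (hV : Simple V) (χ : G → ℂ) (hχ : χ = V.character)
    (piχ : MvPolynomial (Fin n) ℂ → MvPolynomial (Fin n) ℂ)
    (hpiχ : ∀ f, piχ f = (χ 1 / (Fintype.card G : ℂ)) •
      ∑ g : G, (starRingEnd ℂ) (χ g) • polyAct (↑(ρ g⁻¹)) f) :
    (∃ (k : ℕ) (h : Fin k → MvPolynomial (Fin n) ℂ),
      (∀ i, h i ∈ Set.range piχ ∧ ∃ d ≤ Fintype.card G, (h i).IsHomogeneous d) ∧
      ∀ f ∈ Set.range piχ, ∃ c : Fin k → MvPolynomial (Fin n) ℂ,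
        (∀ i, ∀ g : G, polyAct (↑(ρ g⁻¹)) (c i) = c i) ∧ f = ∑ i, c i * h i) ∧
    (∃ (k : ℕ) (h : Fin k → MvPolynomial (Fin n) ℂ),
      ∀ f : MvPolynomial (Fin n) ℂ, ∃ c : Fin k → MvPolynomial (Fin n) ℂ,
        (∀ i, ∀ g : G, polyAct (↑(ρ g⁻¹)) (c i) = c i) ∧ f = ∑ i, c i * h i) := by
  exact isotypic_component_finitely_generated' ρ χ piχ hpiχ
end

section
/- Nonnegativity of AGE signomials via relative entropy: let 𝒜 ⊂ ℝ^n be a finite set, let c_α > 0 for each α ∈ 𝒜, let β ∈ ℝ^n lie in the relative interior of the convex hull of 𝒜, let d ∈ ℝ, and consider the signomial f(x) = Σ_{α ∈ 𝒜} c_α e^{⟨α, x⟩} + d·e^{⟨β, x⟩}. Then f(x) ≥ 0 for all x ∈ ℝ^n if and only if there exists ν ∈ ℝ_{≥0}^𝒜 such that Σ_{α ∈ 𝒜} ν_α α = (Σ_{α ∈ 𝒜} ν_α) β and Σ_{α ∈ 𝒜} ν_α ln(ν_α/(e·c_α)) ≤ d, with the convention 0·ln 0 = 0. -/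
open Real Finset Filter

private lemma le_exp_sub_one (t : ℝ) : t ≤ Real.exp (t - 1) := by
  nlinarith [Real.add_one_le_exp (t - 1)]

private lemma continuous_finset_sup'_aux {X : Type*} [TopologicalSpace X]
    {ι : Type*} {s : Finset ι} (hs : s.Nonempty) (f : ι → X → ℝ)
    (hf : ∀ i ∈ s, Continuous (f i)) :
    Continuous fun x => s.sup' hs (fun i => f i x) := by
  induction hs using Finset.Nonempty.cons_induction with
  | singleton a =>
      simp only [Finset.sup'_singleton]
      exact hf a (by simp)
  | cons a s ha hs ih =>
      have e : (fun x => (Finset.cons a s ha).sup' (Finset.cons_nonempty ha) (fun i => f i x))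
          = fun x => max (f a x) (s.sup' hs (fun i => f i x)) := by
        funext x
        rw [Finset.sup'_cons hs]
      rw [e]
      exact Continuous.max (hf a (by simp))
        (ih (fun i hi => hf i (Finset.mem_cons_of_mem hi)))


/-- **Nonnegativity of AGE signomials via relative entropy
(arithmetic–geometric mean inequality).**
Let `𝒜 ⊂ ℝ^n` be finite, `c_α > 0` for `α ∈ 𝒜`, let `β` lie in the relative interior of
the convex hull of `𝒜`, and let `f(x) = Σ_{α ∈ 𝒜} c_α e^{⟨α,x⟩} + d e^{⟨β,x⟩}`.
Then `f ≥ 0` on `ℝ^n` if and only if there is `ν : 𝒜 → ℝ_{≥0}` with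
`Σ ν_α α = (Σ ν_α) β` and `Σ ν_α ln(ν_α/(e c_α)) ≤ d`
(with the convention `0·ln 0 = 0`, automatic here since `ln 0 = 0`). -/
theorem age_nonneg_iff_relative_entropy {n : ℕ}
    (𝒜 : Finset (Fin n → ℝ)) (c : (Fin n → ℝ) → ℝ) (hc : ∀ α ∈ 𝒜, 0 < c α)
    (β : Fin n → ℝ) (hβ : β ∈ intrinsicInterior ℝ (convexHull ℝ (𝒜 : Set (Fin n → ℝ))))
    (d : ℝ) (f : (Fin n → ℝ) → ℝ)
    (hf : ∀ x, f x = (∑ α ∈ 𝒜, c α * Real.exp (∑ i, α i * x i))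
      + d * Real.exp (∑ i, β i * x i)) :
    (∀ x, 0 ≤ f x) ↔
      ∃ ν : (Fin n → ℝ) → ℝ,
        (∀ α ∈ 𝒜, 0 ≤ ν α) ∧
        (∑ α ∈ 𝒜, ν α • α) = (∑ α ∈ 𝒜, ν α) • β ∧
        (∑ α ∈ 𝒜, ν α * Real.log (ν α / (Real.exp 1 * c α))) ≤ d := by
  constructor
  · intro hpos
    classical
    have h𝒜 : 𝒜.Nonempty := by
      rcases Finset.eq_empty_or_nonempty 𝒜 with h | h
      · exfalso
        subst h
        simp only [Finset.coe_empty, convexHull_empty] at hβ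
        simpa using intrinsicInterior_subset hβ
      · exact h
    set V : Submodule ℝ (Fin n → ℝ) :=
      Submodule.span ℝ ((fun α => α - β) '' (𝒜 : Set (Fin n → ℝ))) with hV
    -- Step A : points of V can be pushed slightly into the convex hull from β
    have hstep : ∀ x ∈ V, ∃ ε : ℝ, 0 < ε ∧
        β + ε • x ∈ convexHull ℝ (𝒜 : Set (Fin n → ℝ)) := by
      intro x hx
      set A := affineSpan ℝ (convexHull ℝ (𝒜 : Set (Fin n → ℝ))) with hA
      have hβA : β ∈ A := subset_affineSpan ℝ _ (intrinsicInterior_subset hβ)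
      have hdir : (V : Set (Fin n → ℝ)) ⊆ (A.direction : Set (Fin n → ℝ)) := by
        rw [hV]
        refine Submodule.span_le.mpr ?_
        rintro _ ⟨α, hα, rfl⟩
        have hαA : α ∈ A := subset_affineSpan ℝ _ (subset_convexHull ℝ _ hα)
        simpa using AffineSubspace.vsub_mem_direction hαA hβA
      have hmem : ∀ t : ℝ, β + t • x ∈ A := by
        intro t
        have := AffineSubspace.vadd_mem_of_mem_direction
          (A.direction.smul_mem t (hdir hx)) hβA
        simpa [add_comm] using this
      obtain ⟨y, hy, hyβ⟩ := hβ
      set γ : ℝ → A := fun t => ⟨β + t • x, hmem t⟩ with hγdef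
      have hγ : Continuous γ := by
        apply Continuous.subtype_mk
        exact continuous_const.add (continuous_id.smul continuous_const)
      have hγ0 : γ 0 = y := by
        apply Subtype.ext
        simp [hγdef, hyβ]
      have hev : ∀ᶠ t : ℝ in nhds 0,
          γ t ∈ interior (((↑) : A → (Fin n → ℝ)) ⁻¹' (convexHull ℝ (𝒜 : Set (Fin n → ℝ)))) := by
        have : γ ⁻¹' (interior (((↑) : A → (Fin n → ℝ)) ⁻¹' (convexHull ℝ (𝒜 : Set (Fin n → ℝ))))) ∈ nhds (0:ℝ) :=
          hγ.continuousAt.preimage_mem_nhds (isOpen_interior.mem_nhds (by rw [hγ0]; exact hy))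
        exact this
      obtain ⟨ε, hε, hball⟩ := Metric.eventually_nhds_iff.mp hev
      refine ⟨ε/2, by positivity, ?_⟩
      have h2 := hball (y := ε/2) (by rw [Real.dist_eq, sub_zero, abs_of_pos (by positivity)]; linarith)
      simpa [hγdef] using interior_subset h2
    -- Step B : separation
    have hsep : ∀ x ∈ V, (∀ α ∈ 𝒜, (∑ i, (α i - β i) * x i) ≤ 0) → x = 0 := by
      intro x hx hneg
      obtain ⟨ε, hε, hmem⟩ := hstep x hx
      rw [Finset.convexHull_eq] at hmem
      obtain ⟨w, hw0, hw1, hwx⟩ := hmem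
      rw [Finset.centerMass_eq_of_sum_1 _ _ hw1] at hwx
      have hpt : ∀ i, ∑ α ∈ 𝒜, w α * (α i - β i) = ε * x i := by
        intro i
        have h1 := congrFun hwx i
        simp only [Finset.sum_apply, Pi.smul_apply, smul_eq_mul, id_eq, Pi.add_apply] at h1
        have h2 : ∑ α ∈ 𝒜, w α * β i = β i := by rw [← Finset.sum_mul, hw1, one_mul]
        have h3 : ∑ α ∈ 𝒜, w α * (α i - β i)
            = (∑ α ∈ 𝒜, w α * α i) - ∑ α ∈ 𝒜, w α * β i := by
          rw [← Finset.sum_sub_distrib]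
          exact Finset.sum_congr rfl fun α _ => by ring
        rw [h3, h2, h1]
        ring
      have hkey : ε * ∑ i, x i * x i ≤ 0 := by
        have e1 : ε * ∑ i, x i * x i = ∑ α ∈ 𝒜, w α * ∑ i, (α i - β i) * x i := by
          calc ε * ∑ i, x i * x i = ∑ i, (ε * x i) * x i := by
                rw [Finset.mul_sum]; exact Finset.sum_congr rfl fun i _ => by ring
            _ = ∑ i, (∑ α ∈ 𝒜, w α * (α i - β i)) * x i := by
                exact Finset.sum_congr rfl fun i _ => by rw [hpt i]
            _ = ∑ i, ∑ α ∈ 𝒜, w α * ((α i - β i) * x i) := by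
                refine Finset.sum_congr rfl fun i _ => ?_
                rw [Finset.sum_mul]
                exact Finset.sum_congr rfl fun α _ => by ring
            _ = ∑ α ∈ 𝒜, ∑ i, w α * ((α i - β i) * x i) := Finset.sum_comm
            _ = ∑ α ∈ 𝒜, w α * ∑ i, (α i - β i) * x i := by
                exact Finset.sum_congr rfl fun α _ => by rw [Finset.mul_sum]
        rw [e1]
        exact Finset.sum_nonpos fun α hα => mul_nonpos_of_nonneg_of_nonpos (hw0 α hα) (hneg α hα)
      have hsq : ∑ i, x i * x i = 0 := by
        have h4 : 0 ≤ ∑ i, x i * x i := Finset.sum_nonneg fun i _ => mul_self_nonneg _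
        nlinarith
      funext i
      have := (Finset.sum_eq_zero_iff_of_nonneg (fun i _ => mul_self_nonneg (x i))).mp hsq i (Finset.mem_univ i)
      simpa using mul_self_eq_zero.mp this
    -- the dual objective on V
    set a : (Fin n → ℝ) → (Fin n → ℝ) → ℝ := fun α v => ∑ i, (α i - β i) * v i with hadef
    set h : V → ℝ := fun v => ∑ α ∈ 𝒜, c α * Real.exp (a α (v : Fin n → ℝ)) with hhdef
    have hacont : ∀ α, Continuous fun v : V => a α (v : Fin n → ℝ) := by
      intro α
      simp only [hadef]
      exact continuous_finset_sum _ fun i _ =>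
        continuous_const.mul ((continuous_apply i).comp continuous_subtype_val)
    have hcont : Continuous h := by
      simp only [hhdef]
      exact continuous_finset_sum _ fun α _ =>
        continuous_const.mul (Real.continuous_exp.comp (hacont α))
    have hminex : ∃ v0 : V, ∀ v : V, h v0 ≤ h v := by
      by_cases hnt : ∀ v : V, v = 0
      · exact ⟨0, fun v => le_of_eq (by rw [hnt v])⟩
      push_neg at hnt
      obtain ⟨v1, hv1⟩ := hnt
      haveI : Nontrivial V := ⟨⟨v1, 0, hv1⟩⟩
      set σ : V → ℝ := fun v => 𝒜.sup' h𝒜 (fun α => a α (v : Fin n → ℝ)) with hσdef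
      have hσcont : Continuous σ :=
        continuous_finset_sup'_aux h𝒜 _ (fun α _ => hacont α)
      have hsph : (Metric.sphere (0:V) 1).Nonempty := NormedSpace.sphere_nonempty.mpr zero_le_one
      obtain ⟨w1, hw1mem, hw1min⟩ :=
        (isCompact_sphere (0:V) 1).exists_isMinOn hsph hσcont.continuousOn
      rw [isMinOn_iff] at hw1min
      set m := σ w1 with hm
      have hw1ne : (w1 : Fin n → ℝ) ≠ 0 := by
        intro h0
        have : w1 = (0:V) := Subtype.ext h0
        rw [this] at hw1mem
        simp at hw1mem
      have hmpos : 0 < m := by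
        by_contra hle
        push_neg at hle
        refine hw1ne (hsep _ w1.2 ?_)
        intro α hα
        exact le_trans (Finset.le_sup' (fun α => a α (w1 : Fin n → ℝ)) hα) hle
      have hσlb : ∀ v : V, m * ‖v‖ ≤ σ v := by
        intro v
        rcases eq_or_ne v 0 with rfl | hv
        · simp [hσdef, hadef, Finset.sup'_const]
        · have hnorm : 0 < ‖v‖ := norm_pos_iff.mpr hv
          set w : V := ‖v‖⁻¹ • v with hw
          have hwmem : w ∈ Metric.sphere (0:V) 1 := by
            rw [hw, mem_sphere_iff_norm, sub_zero]
            have e0 : ‖(‖v‖⁻¹ • v : V)‖ = ‖(‖v‖⁻¹ • (v : Fin n → ℝ))‖ := rfl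
            have e1 : ‖(v : Fin n → ℝ)‖ = ‖v‖ := rfl
            rw [e0, norm_smul, Real.norm_eq_abs, abs_of_pos (inv_pos.mpr hnorm), e1]
            exact inv_mul_cancel₀ hnorm.ne'
          have h1 : ‖v‖ * σ w = σ v := by
            simp only [hσdef]
            rw [Finset.comp_sup'_eq_sup'_comp h𝒜 (fun t : ℝ => ‖v‖ * t)
              (fun x y => by
                exact mul_max_of_nonneg _ _ (norm_nonneg v))]
            refine Finset.sup'_congr h𝒜 rfl fun α hα => ?_
            simp only [Function.comp_apply, hadef, hw]
            rw [Finset.mul_sum]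
            refine Finset.sum_congr rfl fun i _ => ?_
            have e2 : ((‖v‖⁻¹ • v : V) : Fin n → ℝ) i = ‖v‖⁻¹ * (v : Fin n → ℝ) i := rfl
            rw [e2, show ‖v‖ * ((α i - β i) * (‖v‖⁻¹ * (v : Fin n → ℝ) i))
              = (‖v‖ * ‖v‖⁻¹) * ((α i - β i) * (v : Fin n → ℝ) i) from by ring,
              mul_inv_cancel₀ hnorm.ne', one_mul]
          calc m * ‖v‖ = ‖v‖ * m := mul_comm _ _
            _ ≤ ‖v‖ * σ w := by
                exact mul_le_mul_of_nonneg_left (hw1min w hwmem) (norm_nonneg v)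
            _ = σ v := h1
      set cm : ℝ := 𝒜.inf' h𝒜 c with hcm
      have hcmpos : 0 < cm := (Finset.lt_inf'_iff h𝒜).mpr hc
      have hhlb : ∀ v : V, cm * Real.exp (σ v) ≤ h v := by
        intro v
        obtain ⟨α0, hα0, hsup⟩ := Finset.exists_mem_eq_sup' h𝒜 (fun α => a α (v : Fin n → ℝ))
        calc cm * Real.exp (σ v) ≤ c α0 * Real.exp (σ v) := by
              exact mul_le_mul_of_nonneg_right (Finset.inf'_le c hα0) (Real.exp_pos _).le
          _ = c α0 * Real.exp (a α0 (v : Fin n → ℝ)) := by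
              rw [show σ v = a α0 (v : Fin n → ℝ) from hsup]
          _ ≤ h v := by
              simp only [hhdef]
              refine Finset.single_le_sum
                (f := fun α => c α * Real.exp (a α (v : Fin n → ℝ))) (fun α hα => ?_) hα0
              exact mul_nonneg (hc α hα).le (Real.exp_pos _).le
      have hh0pos : 0 < h 0 := by
        simp only [hhdef]
        refine Finset.sum_pos (fun α hα => ?_) h𝒜
        exact mul_pos (hc α hα) (Real.exp_pos _)
      set R : ℝ := max 1 ((Real.log (h 0 / cm) + 1) / m) with hR
      have hev : ∀ᶠ v : V in cocompact V, h 0 ≤ h v := by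
        refine Filter.mem_cocompact.mpr ⟨Metric.closedBall 0 R, isCompact_closedBall _ _, ?_⟩
        intro v hv
        simp only [Set.mem_compl_iff, Metric.mem_closedBall, not_le, dist_zero_right] at hv
        have hlog : Real.log (h 0 / cm) + 1 ≤ m * ‖v‖ := by
          have h2 : ((Real.log (h 0 / cm) + 1) / m) * m ≤ R * m :=
            mul_le_mul_of_nonneg_right (le_max_right _ _) hmpos.le
          have h3 : R * m ≤ ‖v‖ * m := mul_le_mul_of_nonneg_right hv.le hmpos.le
          have h4 : ((Real.log (h 0 / cm) + 1) / m) * m = Real.log (h 0 / cm) + 1 := by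
            field_simp
          nlinarith
        calc h 0 = cm * Real.exp (Real.log (h 0 / cm)) := by
              rw [Real.exp_log (by positivity)]
              field_simp
          _ ≤ cm * Real.exp (σ v) := by
              refine mul_le_mul_of_nonneg_left (Real.exp_le_exp.mpr ?_) hcmpos.le
              have := hσlb v
              linarith
          _ ≤ h v := hhlb v
      exact hcont.exists_forall_le' 0 hev
    obtain ⟨v0, hv0⟩ := hminex
    set x0 : Fin n → ℝ := (v0 : Fin n → ℝ) with hx0
    set ν : (Fin n → ℝ) → ℝ := fun α => c α * Real.exp (a α x0) with hνdef
    set u : Fin n → ℝ := ∑ α ∈ 𝒜, ν α • (α - β) with hudef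
    have huV : u ∈ V := by
      rw [hudef, hV]
      exact Submodule.sum_mem _ fun α hα =>
        Submodule.smul_mem _ _ (Submodule.subset_span ⟨α, hα, rfl⟩)
    set w : V := ⟨u, huV⟩ with hwdef
    have hφ : ∀ t : ℝ, h (v0 + t • w) = ∑ α ∈ 𝒜, c α * Real.exp (a α x0 + t * a α u) := by
      intro t
      simp only [hhdef]
      refine Finset.sum_congr rfl fun α hα => ?_
      refine congrArg (fun z => c α * Real.exp z) ?_
      have e1 : ((v0 + t • w : V) : Fin n → ℝ) = x0 + t • u := rfl
      rw [e1]
      simp only [hadef, Finset.mul_sum, ← Finset.sum_add_distrib]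
      refine Finset.sum_congr rfl fun i _ => ?_
      simp only [Pi.add_apply, Pi.smul_apply, smul_eq_mul]
      ring
    have hder : HasDerivAt (fun t : ℝ => ∑ α ∈ 𝒜, c α * Real.exp (a α x0 + t * a α u))
        (∑ α ∈ 𝒜, c α * (Real.exp (a α x0 + 0 * a α u) * a α u)) 0 := by
      exact HasDerivAt.fun_sum fun α hα =>
        (((hasDerivAt_mul_const (a α u)).const_add (a α x0)).exp).const_mul (c α)
    have hloc : IsLocalMin (fun t : ℝ => ∑ α ∈ 𝒜, c α * Real.exp (a α x0 + t * a α u)) 0 := by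
      apply Filter.Eventually.of_forall
      intro t
      have h1 := hv0 (v0 + t • w)
      rw [hφ t] at h1
      have e0 : (∑ α ∈ 𝒜, c α * Real.exp (a α x0 + (0:ℝ) * a α u)) = h v0 := by
        rw [← hφ 0]
        congr 1
        simp
      simpa [e0] using h1
    have hd0 := hloc.hasDerivAt_eq_zero hder
    have hstat : ∑ α ∈ 𝒜, ν α * a α u = 0 := by
      calc ∑ α ∈ 𝒜, ν α * a α u
          = ∑ α ∈ 𝒜, c α * (Real.exp (a α x0 + 0 * a α u) * a α u) := by
            refine Finset.sum_congr rfl fun α hα => ?_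
            rw [hνdef]
            simp only [zero_mul, add_zero]
            ring
        _ = 0 := hd0
    have hui : ∀ i, (∑ α ∈ 𝒜, ν α * (α i - β i)) = u i := by
      intro i
      rw [hudef]
      simp [Finset.sum_apply, Pi.smul_apply, Pi.sub_apply, smul_eq_mul]
    have hswapgen : ∀ y : Fin n → ℝ, ∑ α ∈ 𝒜, ν α * a α y = ∑ i, u i * y i := by
      intro y
      calc ∑ α ∈ 𝒜, ν α * a α y
          = ∑ α ∈ 𝒜, ∑ i, ν α * ((α i - β i) * y i) := by
            simp only [hadef]
            exact Finset.sum_congr rfl fun α _ => by rw [Finset.mul_sum]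
        _ = ∑ i, ∑ α ∈ 𝒜, ν α * ((α i - β i) * y i) := Finset.sum_comm
        _ = ∑ i, (∑ α ∈ 𝒜, ν α * (α i - β i)) * y i := by
            refine Finset.sum_congr rfl fun i _ => ?_
            rw [Finset.sum_mul]
            exact Finset.sum_congr rfl fun α _ => by ring
        _ = ∑ i, u i * y i := by
            exact Finset.sum_congr rfl fun i _ => by rw [hui i]
    have hu0 : u = 0 := by
      have hsq : ∑ i, u i * u i = 0 := by rw [← hswapgen u, hstat]
      funext i
      have := (Finset.sum_eq_zero_iff_of_nonneg
        (fun i _ => mul_self_nonneg (u i))).mp hsq i (Finset.mem_univ i)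
      simpa using mul_self_eq_zero.mp this
    have hui0 : ∀ i, (∑ α ∈ 𝒜, ν α * (α i - β i)) = 0 := by
      intro i
      rw [hui i, hu0]
      rfl
    refine ⟨ν, fun α hα => mul_nonneg (hc α hα).le (Real.exp_pos _).le, ?_, ?_⟩
    · funext i
      simp only [Finset.sum_apply, Pi.smul_apply, smul_eq_mul]
      have e1 : ∑ α ∈ 𝒜, ν α * α i - (∑ α ∈ 𝒜, ν α) * β i
          = ∑ α ∈ 𝒜, ν α * (α i - β i) := by
        rw [Finset.sum_mul, ← Finset.sum_sub_distrib]
        exact Finset.sum_congr rfl fun α _ => by ring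
      have := hui0 i
      rw [this] at e1
      linarith [e1]
    · have hterm : ∀ α ∈ 𝒜, ν α * Real.log (ν α / (Real.exp 1 * c α)) = ν α * (a α x0 - 1) := by
        intro α hα
        congr 1
        have e1 : ν α / (Real.exp 1 * c α) = Real.exp (a α x0 - 1) := by
          rw [hνdef, Real.exp_sub]
          field_simp [(hc α hα).ne']
        rw [e1, Real.log_exp]
      rw [Finset.sum_congr rfl hterm]
      have hva : ∑ α ∈ 𝒜, ν α * a α x0 = 0 := by
        rw [hswapgen x0, hu0]
        simp
      have hsplit : ∑ α ∈ 𝒜, ν α * (a α x0 - 1)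
          = (∑ α ∈ 𝒜, ν α * a α x0) - ∑ α ∈ 𝒜, ν α := by
        rw [← Finset.sum_sub_distrib]
        exact Finset.sum_congr rfl fun α _ => by ring
      rw [hsplit, hva, zero_sub]
      -- - T ≤ d from nonnegativity at x0
      have hp := hpos x0
      rw [hf x0] at hp
      set b0 : ℝ := ∑ i, β i * x0 i with hb0
      have e1 : ∀ α ∈ 𝒜, c α * Real.exp (∑ i, α i * x0 i) = ν α * Real.exp b0 := by
        intro α hα
        rw [hνdef, mul_assoc, ← Real.exp_add]
        congr 2
        simp only [hadef]
        rw [← Finset.sum_add_distrib]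
        exact Finset.sum_congr rfl fun i _ => by ring
      rw [Finset.sum_congr rfl e1, ← Finset.sum_mul] at hp
      have hexp : (0:ℝ) < Real.exp b0 := Real.exp_pos b0
      by_contra hcon
      push_neg at hcon
      have : (∑ α ∈ 𝒜, ν α) + d < 0 := by linarith
      nlinarith
  · rintro ⟨ν, hν0, hbal, hent⟩
    intro x
    rw [hf]
    set b : ℝ := ∑ i, β i * x i with hb
    set u : (Fin n → ℝ) → ℝ := fun α => ∑ i, α i * x i with hu
    set l : (Fin n → ℝ) → ℝ := fun α => Real.log (ν α / (Real.exp 1 * c α)) with hl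
    have hterm : ∀ α ∈ 𝒜, ν α * (u α - b - l α) * Real.exp b ≤ c α * Real.exp (u α) := by
      intro α hα
      rcases eq_or_lt_of_le (hν0 α hα) with h0 | h0
      · rw [← h0]
        simp only [zero_mul]
        have := hc α hα
        positivity
      · have hcα := hc α hα
        have hlog : l α = Real.log (ν α) - 1 - Real.log (c α) := by
          simp only [hl]
          rw [Real.log_div (ne_of_gt h0) (by positivity),
            Real.log_mul (by positivity) (ne_of_gt hcα), Real.log_exp]
          ring
        have hid : ν α * Real.exp (u α - b - l α - 1) * Real.exp b = c α * Real.exp (u α) := by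
          calc ν α * Real.exp (u α - b - l α - 1) * Real.exp b
              = Real.exp (Real.log (ν α) + (u α - b - l α - 1) + b) := by
                rw [Real.exp_add, Real.exp_add, Real.exp_log h0]
            _ = Real.exp (Real.log (c α) + u α) := by
                congr 1; rw [hlog]; ring
            _ = c α * Real.exp (u α) := by rw [Real.exp_add, Real.exp_log hcα]
        calc ν α * (u α - b - l α) * Real.exp b
            ≤ ν α * Real.exp (u α - b - l α - 1) * Real.exp b := by
              exact mul_le_mul_of_nonneg_right
                (mul_le_mul_of_nonneg_left (le_exp_sub_one (u α - b - l α)) h0.le)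
                (Real.exp_pos b).le
          _ = c α * Real.exp (u α) := hid
    have hsum : ∑ α ∈ 𝒜, ν α * (u α - b - l α) * Real.exp b
        ≤ ∑ α ∈ 𝒜, c α * Real.exp (u α) := Finset.sum_le_sum hterm
    have hbal' : ∀ i, ∑ α ∈ 𝒜, ν α * α i = (∑ α ∈ 𝒜, ν α) * β i := by
      intro i
      have := congrFun hbal i
      simpa [Finset.sum_apply, Pi.smul_apply, smul_eq_mul] using this
    have hswap : ∑ α ∈ 𝒜, ν α * u α = (∑ α ∈ 𝒜, ν α) * b := by
      calc ∑ α ∈ 𝒜, ν α * u α = ∑ α ∈ 𝒜, ∑ i, ν α * (α i * x i) := by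
            simp [hu, Finset.mul_sum]
        _ = ∑ i, ∑ α ∈ 𝒜, ν α * (α i * x i) := Finset.sum_comm
        _ = ∑ i, (∑ α ∈ 𝒜, ν α * α i) * x i := by
            congr 1; funext i
            rw [Finset.sum_mul]
            congr 1; funext α
            ring
        _ = ∑ i, ((∑ α ∈ 𝒜, ν α) * β i) * x i := by simp_rw [hbal']
        _ = (∑ α ∈ 𝒜, ν α) * b := by rw [hb, Finset.mul_sum]; congr 1; funext i; ring
    have hS : ∑ α ∈ 𝒜, ν α * (u α - b - l α) * Real.exp b
        = (∑ α ∈ 𝒜, ν α * u α - (∑ α ∈ 𝒜, ν α) * b - ∑ α ∈ 𝒜, ν α * l α) * Real.exp b := by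
      rw [← Finset.sum_mul]
      congr 1
      rw [Finset.sum_mul, ← Finset.sum_sub_distrib, ← Finset.sum_sub_distrib]
      exact Finset.sum_congr rfl fun α _ => by ring
    rw [hswap] at hS
    have hexp : (0:ℝ) < Real.exp b := Real.exp_pos b
    have hLd : ∑ α ∈ 𝒜, ν α * l α ≤ d := hent
    nlinarith [hS, hsum, mul_le_mul_of_nonneg_right hLd hexp.le]
end
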